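/- arXiv:1910.00743 — 6 statements merged into one kernel-verified Lean document; each statement's English description precedes it below -/
import Mathlib

section
/- Let n, n_1, n_2, m be positive integers with n ≤ n_1 ≤ m and n ≤ n_2 ≤ m. Let X be the n_2×n_1 upper-left submatrix of a Haar-distributed m×m complex unitary matrix, and X̃ the n_2×n upper-left submatrix of a Haar-distributed m×m complex unitary matrix. Let W be a fixed n_1×n complex matrix and W̃ := (Wᴴ W)^{1/2} (positive semidefinite square root, an n×n matrix). Then charpoly( (XW)ᴴ (XW) ) and charpoly( (X̃ W̃)ᴴ (X̃ W̃) ) have the same distribution; equivalently, XW and X̃ W̃ have the same distribution of singular values. -/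
/-!
Pad `W` and `W̃ = (WᴴW)^{1/2}` with zero rows to `m × n` matrices. Both have Gram matrix `WᴴW`,
so (extending a partial isometry between their column spaces) some unitary `V` of size `m` maps
the padded `W̃` onto the padded `W`. Then for every unitary `U` the corner `X` of `U` satisfies
`X W = X̃ W̃`, where `X̃` is the corresponding corner of `UV`. Haar measure on the compact group
`U(m)` is also right invariant, so `UV` is again Haar distributed, and `XW` and `X̃W̃` even have
the same law as matrices.
-/

open MeasureTheory Matrix
open scoped ComplexOrder

/-- The Borel σ-algebra on matrices (as a pi type). -/
noncomputable instance matrixMeasurableSpace {m n α : Type*} [MeasurableSpace α] :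
    MeasurableSpace (Matrix m n α) :=
  (inferInstance : MeasurableSpace (m → n → α))

/-- The σ-algebra on polynomials generated by the coefficient functions (so that two
random polynomials have the same law iff their coefficient processes do). -/
noncomputable instance polynomialMeasurableSpace : MeasurableSpace (Polynomial ℂ) :=
  MeasurableSpace.comap (fun p (n : ℕ) => p.coeff n) inferInstance

/-- A probability measure on the unitary group which is invariant under left
translations; on this compact (Polish) group this characterizes the Haar probability
measure. -/
def IsHaarUnitary {L : ℕ} (μ : Measure (Matrix.unitaryGroup (Fin L) ℂ)) : Prop :=
  IsProbabilityMeasure μ ∧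
    ∀ g : Matrix.unitaryGroup (Fin L) ℂ, Measure.map (fun u => g * u) μ = μ

open scoped InnerProductSpace

section Topology

variable {α κ ι : Type*}

instance Matrix.secondCountableTopology [Countable κ] [Countable ι] [TopologicalSpace α]
    [SecondCountableTopology α] : SecondCountableTopology (Matrix κ ι α) :=
  inferInstanceAs (SecondCountableTopology (κ → ι → α))

instance Matrix.borelSpace [Countable κ] [Countable ι] [TopologicalSpace α] [MeasurableSpace α]
    [BorelSpace α] [SecondCountableTopology α] : BorelSpace (Matrix κ ι α) :=
  inferInstanceAs (BorelSpace (κ → ι → α))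

variable {𝕜 : Type*} [RCLike 𝕜] [Fintype κ] [DecidableEq κ]

instance Matrix.unitaryGroup.compactSpace : CompactSpace (unitaryGroup κ 𝕜) := by
  have hK : IsCompact (X := Matrix κ κ 𝕜)
      (Set.univ.pi fun _ => Set.univ.pi fun _ => Metric.closedBall 0 1) :=
    isCompact_univ_pi fun _ => isCompact_univ_pi fun _ => isCompact_closedBall 0 1
  exact isCompact_iff_compactSpace.mp <|
    hK.of_isClosed_subset (isClosed_unitary (R := Matrix κ κ 𝕜)) fun _ hU i _ j _ => by
      simpa using entry_norm_bound_of_unitary hU i j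

instance Matrix.unitaryGroup.borelSpace : BorelSpace (unitaryGroup κ ℂ) :=
  Subtype.borelSpace _

end Topology

theorem Matrix.continuous_charpoly_coeff {R n : Type*} [CommRing R] [TopologicalSpace R]
    [IsTopologicalRing R] [Fintype n] [DecidableEq n] (k : ℕ) :
    Continuous fun M : Matrix n n R => M.charpoly.coeff k := by
  have key (M : Matrix n n R) : M.charpoly.coeff k =
      MvPolynomial.eval (fun ij => M ij.1 ij.2) ((charpoly.univ R n).coeff k) := by
    have h := charpoly.univ_coeff_eval₂Hom n (RingHom.id R) (fun ij => M ij.1 ij.2) k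
    rw [show of (Function.curry fun ij : n × n => M ij.1 ij.2) = M from rfl] at h
    exact h.symm
  simp_rw [key]
  exact (MvPolynomial.continuous_eval _).comp (continuous_pi fun ij => continuous_apply_apply _ _)

theorem Matrix.measurable_charpoly {n : Type*} [Fintype n] [DecidableEq n] :
    Measurable fun M : Matrix n n ℂ => M.charpoly := by
  rintro _ ⟨t, ht, rfl⟩
  exact (measurable_pi_lambda _ fun k => (continuous_charpoly_coeff k).measurable) ht

namespace IsHaarUnitary

variable {L : ℕ} {μ ν : Measure (unitaryGroup (Fin L) ℂ)}

theorem isHaarMeasure (hμ : IsHaarUnitary μ) : μ.IsHaarMeasure :=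
  have : IsProbabilityMeasure μ := hμ.1
  have : μ.IsMulLeftInvariant := ⟨hμ.2⟩
  have : μ.IsOpenPosMeasure :=
    isOpenPosMeasure_of_mulLeftInvariant_of_compact Set.univ isCompact_univ (by simp)
  { }

theorem eq (hμ : IsHaarUnitary μ) (hν : IsHaarUnitary ν) : μ = ν :=
  have : IsProbabilityMeasure μ := hμ.1
  have : IsProbabilityMeasure ν := hν.1
  have := hμ.isHaarMeasure
  have := hν.isHaarMeasure
  Measure.isHaarMeasure_eq_of_isProbabilityMeasure μ ν

theorem map_mul_right (hμ : IsHaarUnitary μ) (V : unitaryGroup (Fin L) ℂ) :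
    μ.map (· * V) = μ := by
  have : IsProbabilityMeasure μ := hμ.1
  refine IsHaarUnitary.eq ⟨Measure.isProbabilityMeasure_map (measurable_mul_const V).aemeasurable,
    fun g => ?_⟩ hμ
  have hcomm : (g * ·) ∘ (· * V) = (· * V) ∘ (g * ·) := funext fun U => (mul_assoc g U V).symm
  rw [Measure.map_map (measurable_const_mul g) (measurable_mul_const V), hcomm,
    ← Measure.map_map (measurable_mul_const V) (measurable_const_mul g), hμ.2 g]

end IsHaarUnitary

theorem LinearMap.exists_linearIsometryEquiv_comp_eq {𝕜 E F : Type*} [RCLike 𝕜]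
    [NormedAddCommGroup E] [InnerProductSpace 𝕜 E] [FiniteDimensional 𝕜 E]
    [AddCommGroup F] [Module 𝕜 F] (T S : F →ₗ[𝕜] E) (h : ∀ x, ‖T x‖ = ‖S x‖) :
    ∃ e : E ≃ₗᵢ[𝕜] E, ∀ x, e (T x) = S x := by
  -- `S` factors through `range T` as an isometry, which then extends to all of `E`.
  have hker : ker T ≤ ker S := fun x hx => by
    rw [mem_ker, ← norm_eq_zero, ← h, norm_eq_zero]
    exact hx
  let L : range T →ₗ[𝕜] E := (ker T).liftQ S hker ∘ₗ T.quotKerEquivRange.symm.toLinearMap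
  have hL (x : F) : L ⟨T x, mem_range_self T x⟩ = S x := by
    simp only [L, LinearMap.comp_apply, LinearEquiv.coe_coe, quotKerEquivRange_symm_apply_image]
    rfl
  let L' : range T →ₗᵢ[𝕜] E :=
    { L with norm_map' := by rintro ⟨_, x, rfl⟩; exact (congrArg norm (hL x)).trans (h x).symm }
  refine ⟨L'.extend.toLinearIsometryEquiv rfl, fun x => ?_⟩
  rw [LinearIsometry.toLinearIsometryEquiv_apply]
  exact (L'.extend_apply ⟨T x, mem_range_self T x⟩).trans (hL x)

theorem Matrix.inner_toEuclideanLin_toEuclideanLin {𝕜 m n : Type*} [RCLike 𝕜] [Fintype m]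
    [DecidableEq m] [Fintype n] [DecidableEq n] (N : Matrix m n 𝕜) (x y : EuclideanSpace 𝕜 n) :
    ⟪toEuclideanLin N x, toEuclideanLin N y⟫_𝕜 = ⟪x, toEuclideanLin (Nᴴ * N) y⟫_𝕜 := by
  rw [toLpLin_mul_same, LinearMap.comp_apply, toEuclideanLin_conjTranspose_eq_adjoint,
    LinearMap.adjoint_inner_right]

theorem Matrix.exists_mem_unitaryGroup_mul_eq_of_conjTranspose_mul_self_eq {𝕜 m n : Type*}
    [RCLike 𝕜] [Fintype m] [DecidableEq m] [Fintype n] [DecidableEq n] {M N : Matrix m n 𝕜}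
    (h : Mᴴ * M = Nᴴ * N) : ∃ A ∈ unitaryGroup m 𝕜, A * N = M := by
  have hnorm (x : EuclideanSpace 𝕜 n) : ‖toEuclideanLin N x‖ = ‖toEuclideanLin M x‖ := by
    rw [@norm_eq_sqrt_re_inner 𝕜, @norm_eq_sqrt_re_inner 𝕜,
      inner_toEuclideanLin_toEuclideanLin, inner_toEuclideanLin_toEuclideanLin, h]
  obtain ⟨e, he⟩ := LinearMap.exists_linearIsometryEquiv_comp_eq _ _ hnorm
  refine ⟨(toEuclideanCLM (n := m) (𝕜 := 𝕜)).symm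
      (e : EuclideanSpace 𝕜 m →L[𝕜] EuclideanSpace 𝕜 m),
    Unitary.map_mem _ (Unitary.linearIsometryEquiv.symm e).2, toEuclideanLin.injective ?_⟩
  ext1 x
  rw [toLpLin_mul_same, LinearMap.comp_apply, ← coe_toEuclideanCLM_eq_toEuclideanLin,
    StarAlgEquiv.apply_symm_apply]
  exact he x

theorem Matrix.PosSemidef.conjTranspose_cfc_sqrt_mul_self {𝕜 n : Type*} [RCLike 𝕜] [Fintype n]
    [DecidableEq n] {A : Matrix n n 𝕜} (hA : A.PosSemidef) :
    (hA.1.cfc Real.sqrt)ᴴ * hA.1.cfc Real.sqrt = A := by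
  have hspec : ∀ x ∈ spectrum ℝ A, Real.sqrt x * Real.sqrt x = x := by
    rw [hA.1.spectrum_real_eq_range_eigenvalues]
    rintro _ ⟨i, rfl⟩
    exact Real.mul_self_sqrt (hA.eigenvalues_nonneg i)
  rw [← hA.1.cfc_eq, ← star_eq_conjTranspose, (cfc_predicate Real.sqrt A).star_eq,
    ← cfc_mul Real.sqrt Real.sqrt A, cfc_congr hspec]
  exact cfc_id' ℝ A hA.1

section Corner

variable {α κ ι ρ : Type*}

theorem Matrix.submatrix_eq_submatrix_id_mul_submatrix_one [NonAssocSemiring α] [Fintype κ]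
    [DecidableEq κ] (M : Matrix ρ κ α) (r : ι → ρ) {ι' : Type*} (c : ι' → κ) :
    M.submatrix r c = M.submatrix r id * (1 : Matrix κ κ α).submatrix id c := by
  simpa using (mul_submatrix_one (Equiv.refl κ) c (M.submatrix r id)).symm

theorem Matrix.conjTranspose_submatrix_one_mul_self [NonAssocSemiring α] [StarRing α] [Fintype κ]
    [DecidableEq κ] [DecidableEq ι] {c : ι → κ} (hc : Function.Injective c) :
    ((1 : Matrix κ κ α).submatrix id c)ᴴ * (1 : Matrix κ κ α).submatrix id c = 1 := by
  rw [conjTranspose_submatrix, conjTranspose_one, ← submatrix_mul _ _ _ _ _ Function.bijective_id,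
    Matrix.one_mul, submatrix_one c hc]

theorem Matrix.exists_mem_unitaryGroup_submatrix_mul_eq {𝕜 ι₁ ι₂ : Type*} [RCLike 𝕜]
    [Fintype κ] [DecidableEq κ] [Fintype ι] [DecidableEq ι] [Fintype ι₁] [DecidableEq ι₁]
    [Fintype ι₂] [DecidableEq ι₂]
    {c₁ : ι₁ → κ} {c₂ : ι₂ → κ} (hc₁ : Function.Injective c₁) (hc₂ : Function.Injective c₂)
    {W₁ : Matrix ι₁ ι 𝕜} {W₂ : Matrix ι₂ ι 𝕜} (h : W₁ᴴ * W₁ = W₂ᴴ * W₂) :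
    ∃ V ∈ unitaryGroup κ 𝕜, ∀ (r : ρ → κ) (U : Matrix κ κ 𝕜),
      U.submatrix r c₁ * W₁ = (U * V).submatrix r c₂ * W₂ := by
  set E₁ := (1 : Matrix κ κ 𝕜).submatrix id c₁
  set E₂ := (1 : Matrix κ κ 𝕜).submatrix id c₂
  have hgram : (E₁ * W₁)ᴴ * (E₁ * W₁) = (E₂ * W₂)ᴴ * (E₂ * W₂) := by
    rw [conjTranspose_mul, conjTranspose_mul, Matrix.mul_assoc, ← Matrix.mul_assoc E₁ᴴ,
      conjTranspose_submatrix_one_mul_self hc₁, Matrix.mul_assoc, ← Matrix.mul_assoc E₂ᴴ,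
      conjTranspose_submatrix_one_mul_self hc₂, Matrix.one_mul, Matrix.one_mul, h]
  obtain ⟨V, hV, hVE⟩ := exists_mem_unitaryGroup_mul_eq_of_conjTranspose_mul_self_eq hgram
  refine ⟨V, hV, fun r U => ?_⟩
  calc U.submatrix r c₁ * W₁ = U.submatrix r id * (E₁ * W₁) := by
        rw [submatrix_eq_submatrix_id_mul_submatrix_one, Matrix.mul_assoc]
    _ = U.submatrix r id * V * (E₂ * W₂) := by rw [← hVE, Matrix.mul_assoc]
    _ = (U * V).submatrix r c₂ * W₂ := by
        rw [submatrix_eq_submatrix_id_mul_submatrix_one (U * V),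
          submatrix_mul _ _ _ _ _ Function.bijective_id, submatrix_id_id, Matrix.mul_assoc,
          Matrix.mul_assoc, Matrix.mul_assoc]

end Corner

theorem truncated_haar_unitary_mul_fixed_matrix_law_general
    (n n₁ n₂ m : ℕ) (hn₁ : n ≤ n₁) (h₁m : n₁ ≤ m) (h₂m : n₂ ≤ m)
    (μ₁ μ₂ : Measure (Matrix.unitaryGroup (Fin m) ℂ))
    (hμ₁ : IsHaarUnitary μ₁) (hμ₂ : IsHaarUnitary μ₂)
    (W : Matrix (Fin n₁) (Fin n) ℂ) :
    Measure.map
      (fun U : Matrix.unitaryGroup (Fin m) ℂ =>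
        Matrix.charpoly
          (let X : Matrix (Fin n₂) (Fin n₁) ℂ :=
            Matrix.submatrix (U : Matrix (Fin m) (Fin m) ℂ) (Fin.castLE h₂m) (Fin.castLE h₁m)
          (X * W)ᴴ * (X * W))) μ₁
      = Measure.map
        (fun U : Matrix.unitaryGroup (Fin m) ℂ =>
          Matrix.charpoly
            (let Xt : Matrix (Fin n₂) (Fin n) ℂ :=
              Matrix.submatrix (U : Matrix (Fin m) (Fin m) ℂ) (Fin.castLE h₂m)
                (Fin.castLE (hn₁.trans h₁m))
            let Wt : Matrix (Fin n) (Fin n) ℂ :=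
              ((Matrix.posSemidef_conjTranspose_mul_self W).1.eigenvectorUnitary :
                  Matrix (Fin n) (Fin n) ℂ) *
                Matrix.diagonal ((↑) ∘ (Real.sqrt ·) ∘
                  (Matrix.posSemidef_conjTranspose_mul_self W).1.eigenvalues) *
                (star (Matrix.posSemidef_conjTranspose_mul_self W).1.eigenvectorUnitary :
                  Matrix (Fin n) (Fin n) ℂ)
            (Xt * Wt)ᴴ * (Xt * Wt))) μ₂ := by
  -- `Wt` is by definition `(posSemidef_conjTranspose_mul_self W).1.cfc Real.sqrt`.
  obtain ⟨V, hV, hcorner⟩ := exists_mem_unitaryGroup_submatrix_mul_eq (ρ := Fin n₂)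
    (Fin.castLE_injective h₁m) (Fin.castLE_injective (hn₁.trans h₁m))
    (posSemidef_conjTranspose_mul_self W).conjTranspose_cfc_sqrt_mul_self.symm
  rw [hμ₁.eq hμ₂]
  conv_rhs => rw [← hμ₂.map_mul_right ⟨V, hV⟩]
  rw [Measure.map_map ?_ (measurable_mul_const _)]
  · congr 1
    funext U
    exact congrArg (fun M => charpoly (Mᴴ * M)) (hcorner (Fin.castLE h₂m) U)
  · exact measurable_charpoly.comp (by fun_prop : Continuous _).measurable

/-- **Singular values of `XW` and `X̃·(WᴴW)^{1/2}` agree in law** (β = 2 case of the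
paper's Lemma A.2): for `n ≤ n₁, n₂ ≤ m`, `X` the `n₂×n₁` corner of a Haar unitary
`m×m` matrix, `X̃` the `n₂×n` corner of a Haar unitary `m×m` matrix, and a fixed
`n₁×n` matrix `W` with `W̃ = (WᴴW)^{1/2}`, the characteristic polynomials of
`(XW)ᴴ(XW)` and `(X̃W̃)ᴴ(X̃W̃)` have the same distribution. -/
theorem truncated_haar_unitary_mul_fixed_matrix_law
    (n n₁ n₂ m : ℕ) (hn₁ : n ≤ n₁) (hn₂ : n ≤ n₂) (h₁m : n₁ ≤ m) (h₂m : n₂ ≤ m)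
    (μ₁ μ₂ : Measure (Matrix.unitaryGroup (Fin m) ℂ))
    (hμ₁ : IsHaarUnitary μ₁) (hμ₂ : IsHaarUnitary μ₂)
    (W : Matrix (Fin n₁) (Fin n) ℂ) :
    Measure.map
      (fun U : Matrix.unitaryGroup (Fin m) ℂ =>
        Matrix.charpoly
          (let X : Matrix (Fin n₂) (Fin n₁) ℂ :=
            Matrix.submatrix (U : Matrix (Fin m) (Fin m) ℂ) (Fin.castLE h₂m) (Fin.castLE h₁m)
          (X * W)ᴴ * (X * W))) μ₁
      = Measure.map
        (fun U : Matrix.unitaryGroup (Fin m) ℂ =>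
          Matrix.charpoly
            (let Xt : Matrix (Fin n₂) (Fin n) ℂ :=
              Matrix.submatrix (U : Matrix (Fin m) (Fin m) ℂ) (Fin.castLE h₂m)
                (Fin.castLE (hn₁.trans h₁m))
            let Wt : Matrix (Fin n) (Fin n) ℂ :=
              ((Matrix.posSemidef_conjTranspose_mul_self W).1.eigenvectorUnitary :
                  Matrix (Fin n) (Fin n) ℂ) *
                Matrix.diagonal ((↑) ∘ (Real.sqrt ·) ∘
                  (Matrix.posSemidef_conjTranspose_mul_self W).1.eigenvalues) *
                (star (Matrix.posSemidef_conjTranspose_mul_self W).1.eigenvectorUnitary :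
                  Matrix (Fin n) (Fin n) ℂ)
            (Xt * Wt)ᴴ * (Xt * Wt))) μ₂ :=
  truncated_haar_unitary_mul_fixed_matrix_law_general n n₁ n₂ m hn₁ h₁m h₂m μ₁ μ₂ hμ₁ hμ₂ W
end

section
/- Fix c, δ, η > 0. There exists a constant C > 0 such that for all integers N ≥ 1, all reals L ≥ N + 2(c+1), and all u ∈ 𝔑_η^{(N)}, one has |₍c₎G_L(u)| ≥ exp( −C·(N+1)/(L − N) ). In particular, for any r > 1 there is a constant C' > 0 such that |₍c₎G_L(u)| ≥ e^{−C'} for all u ∈ 𝔑_η^{(N)} whenever L ≥ rN and N is sufficiently large. -/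
/-- `₍c₎G_L(u) := L^{−c} · Γ(L−u)/Γ(L−u−c)` where `L^{−c} = exp(−c log L)` (real log). -/
noncomputable def cGL (c : ℝ) (L : ℝ) (u : ℂ) : ℂ :=
  (Real.exp (-c * Real.log L) : ℝ) * Complex.Gamma ((L : ℂ) - u) / Complex.Gamma ((L : ℂ) - u - c)

/-- The region `𝔑_η^{(N)} = {u ∈ ℂ : |Im u| ≤ η, −η ≤ Re u ≤ N − δ}`. -/
def strip (η δ : ℝ) (N : ℕ) : Set ℂ :=
  {u : ℂ | |u.im| ≤ η ∧ -η ≤ u.re ∧ u.re ≤ (N : ℝ) - δ}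


/-!
With `z = L - u` and `s = z - c`, the Beta identity `Γ(s) Γ(c) = Γ(z) B(s, c)` gives
`|Γ(z)/Γ(s)| = Γ(c)/|B(s, c)|`. Bounding `|x^(s-1)| ≤ e^{-(Re s - 1)(1 - x)}` on `[0, 1]`
yields `|B(s, c)| ≤ Γ(c) (Re s - 1)^{-c}`, hence `|₍c₎G_L(u)| ≥ (A/L)^c` with
`A = L - Re u - c - 1 ≥ (L - N)/2`. Finally `(A/L)^c ≥ exp(-c (L - A)/A)` and
`L - A ≤ (c + 2)(N + 1)`.
-/

open MeasureTheory Set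

theorem Real.integral_exp_neg_mul_mul_rpow_le {c lam : ℝ} (hc : 0 < c) (hlam : 0 < lam) {a : ℝ}
    (ha : 0 ≤ a) :
    ∫ s in (0 : ℝ)..a, Real.exp (-(lam * s)) * s ^ (c - 1) ≤ Real.Gamma c / lam ^ c := by
  have hint : IntegrableOn (fun s : ℝ => s ^ (c - 1) * Real.exp (-(lam * s))) (Ioi 0) := by
    simpa using integrableOn_rpow_mul_exp_neg_mul_rpow (p := 1) (by linarith) one_pos hlam
  calc ∫ s in (0 : ℝ)..a, Real.exp (-(lam * s)) * s ^ (c - 1)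
      = ∫ s in Ioc 0 a, s ^ (c - 1) * Real.exp (-(lam * s)) := by
        rw [intervalIntegral.integral_of_le ha]
        simp only [mul_comm]
    _ ≤ ∫ s in Ioi 0, s ^ (c - 1) * Real.exp (-(lam * s)) := by
        refine setIntegral_mono_set hint ?_ Ioc_subset_Ioi_self.eventuallyLE
        filter_upwards [ae_restrict_mem measurableSet_Ioi] with s (hs : 0 < s)
        positivity
    _ = Real.Gamma c / lam ^ c := by
        rw [Real.integral_rpow_mul_exp_neg_mul_Ioi hc hlam, one_div, Real.inv_rpow hlam.le,
          div_eq_inv_mul]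

theorem Real.rpow_le_exp_neg_mul_one_sub {x a : ℝ} (hx : 0 ≤ x) (ha : 0 ≤ a) :
    x ^ a ≤ Real.exp (-(a * (1 - x))) := by
  rcases hx.eq_or_lt with rfl | hx
  · rcases ha.eq_or_lt with rfl | ha
    · simp
    · rw [Real.zero_rpow ha.ne']
      positivity
  · rw [Real.rpow_def_of_pos hx, Real.exp_le_exp]
    nlinarith [Real.log_le_sub_one_of_pos hx]

theorem Complex.norm_betaIntegral_le {c : ℝ} (hc : 0 < c) {s : ℂ} (hs : 1 < s.re) :
    ‖betaIntegral s c‖ ≤ Real.Gamma c / (s.re - 1) ^ c := by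
  set lam := s.re - 1
  have hlam : 0 < lam := sub_pos.2 hs
  have hpt : ∀ x ∈ Icc (0 : ℝ) 1, ‖(x : ℂ) ^ (s - 1) * (1 - (x : ℂ)) ^ ((c : ℂ) - 1)‖ ≤
      Real.exp (-(lam * (1 - x))) * (1 - x) ^ (c - 1) := by
    rintro x ⟨hx0, hx1⟩
    have hre : (s - 1).re = lam := by simp [lam]
    have hcast : (1 - (x : ℂ)) ^ ((c : ℂ) - 1) = ((1 - x) ^ (c - 1) : ℝ) := by
      rw [Complex.ofReal_cpow (by linarith)]
      push_cast
      ring_nf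
    rw [norm_mul, hcast, Complex.norm_real, Real.norm_of_nonneg (by bound),
      norm_cpow_eq_rpow_re_of_nonneg hx0 (hre ▸ hlam.ne'), hre]
    gcongr
    exact Real.rpow_le_exp_neg_mul_one_sub hx0 hlam.le
  have hrpow : IntervalIntegrable (fun x : ℝ => (1 - x) ^ (c - 1)) volume 0 1 := by
    simpa using ((intervalIntegral.intervalIntegrable_rpow' (a := 0) (b := 1)
      (by linarith : -1 < c - 1)).comp_sub_left 1).symm
  have hgint : IntervalIntegrable
      (fun x : ℝ => Real.exp (-(lam * (1 - x))) * (1 - x) ^ (c - 1)) volume 0 1 :=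
    hrpow.continuousOn_mul (by fun_prop)
  calc ‖betaIntegral s c‖
      ≤ ∫ x in (0 : ℝ)..1, ‖(x : ℂ) ^ (s - 1) * (1 - (x : ℂ)) ^ ((c : ℂ) - 1)‖ :=
        intervalIntegral.norm_integral_le_integral_norm zero_le_one
    _ ≤ ∫ x in (0 : ℝ)..1, Real.exp (-(lam * (1 - x))) * (1 - x) ^ (c - 1) :=
        intervalIntegral.integral_mono_on zero_le_one
          (betaIntegral_convergent (by linarith) (by simpa using hc)).norm hgint hpt
    _ = ∫ x in (0 : ℝ)..1, Real.exp (-(lam * x)) * x ^ (c - 1) := by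
        simpa using intervalIntegral.integral_comp_sub_left
          (fun x : ℝ => Real.exp (-(lam * x)) * x ^ (c - 1)) 1 (a := 0) (b := 1)
    _ ≤ Real.Gamma c / lam ^ c := Real.integral_exp_neg_mul_mul_rpow_le hc hlam zero_le_one

theorem Complex.rpow_le_norm_Gamma_div_Gamma_sub {c : ℝ} (hc : 0 < c) {z : ℂ} (hz : 1 < z.re - c) :
    (z.re - c - 1) ^ c ≤ ‖Gamma z / Gamma (z - c)‖ := by
  have hs : (z - c).re = z.re - c := by simp
  have hΓs : 0 < ‖Gamma (z - c)‖ := norm_pos_iff.2 (Gamma_ne_zero_of_re_pos (by linarith))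
  have hΓc : 0 < Real.Gamma c := Real.Gamma_pos_of_pos hc
  have hbeta : ‖Gamma (z - c)‖ * Real.Gamma c = ‖Gamma z‖ * ‖betaIntegral (z - c) c‖ := by
    have h := Gamma_mul_Gamma_eq_betaIntegral (s := z - c) (t := c) (by linarith)
      (by simpa using hc)
    rw [sub_add_cancel, Gamma_ofReal] at h
    simpa [abs_of_pos hΓc] using congrArg norm h
  have hB : ‖betaIntegral (z - c) c‖ * (z.re - c - 1) ^ c ≤ Real.Gamma c := by
    have := norm_betaIntegral_le hc (hs ▸ hz)
    rwa [hs, le_div_iff₀ (by bound)] at this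
  have hBpos : 0 < ‖betaIntegral (z - c) c‖ := by
    by_contra! h
    have : ‖Gamma (z - c)‖ * Real.Gamma c = 0 := by
      rw [hbeta, le_antisymm h (norm_nonneg _), mul_zero]
    exact (mul_pos hΓs hΓc).ne' this
  rw [norm_div, le_div_iff₀ hΓs]
  refine le_of_mul_le_mul_right ?_ hBpos
  calc (z.re - c - 1) ^ c * ‖Gamma (z - c)‖ * ‖betaIntegral (z - c) c‖
      ≤ Real.Gamma c * ‖Gamma (z - c)‖ := by nlinarith
    _ = ‖Gamma z‖ * ‖betaIntegral (z - c) c‖ := by rw [← hbeta, mul_comm]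

theorem rpow_le_norm_cGL {c L : ℝ} (hc : 0 < c) (hL : 0 < L) {u : ℂ} (hu : 1 < L - u.re - c) :
    ((L - u.re - c - 1) / L) ^ c ≤ ‖cGL c L u‖ := by
  have hΓ := Complex.rpow_le_norm_Gamma_div_Gamma_sub hc (z := L - u) (by simpa using hu)
  simp only [Complex.sub_re, Complex.ofReal_re] at hΓ
  have hLc : Real.exp (-c * Real.log L) = (L ^ c)⁻¹ := by
    rw [Real.rpow_def_of_pos hL, ← Real.exp_neg, neg_mul, mul_comm]
  rw [cGL, mul_div_assoc, norm_mul, Complex.norm_real, hLc, Real.norm_of_nonneg (by positivity),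
    Real.div_rpow (by linarith) hL.le, div_eq_inv_mul]
  gcongr

theorem Real.exp_neg_mul_sub_div_le_rpow {a b c : ℝ} (ha : 0 < a) (hb : 0 < b) (hc : 0 ≤ c) :
    Real.exp (-(c * ((b - a) / a))) ≤ (a / b) ^ c := by
  rw [Real.rpow_def_of_pos (div_pos ha hb), Real.exp_le_exp]
  have h := Real.one_sub_inv_le_log_of_pos (div_pos ha hb)
  rw [inv_div] at h
  have : (b - a) / a = b / a - 1 := by field_simp
  nlinarith

theorem exp_le_norm_cGL {c L N : ℝ} (hc : 0 < c) (hN : 0 ≤ N) (hL : N + 2 * (c + 1) ≤ L) {u : ℂ}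
    (hu : u.re ≤ N) :
    Real.exp (-(2 * c * (c + 2)) * (N + 1) / (L - N)) ≤ ‖cGL c L u‖ := by
  set A := L - u.re - c - 1
  have hLN : 0 < L - N := by linarith
  have hA : (L - N) / 2 ≤ A := by linarith
  have hApos : 0 < A := by linarith
  have hsub : (L - A) / A ≤ 2 * (c + 2) * (N + 1) / (L - N) := by
    rw [div_le_div_iff₀ hApos hLN]
    have hLA : L - A ≤ (c + 2) * (N + 1) := by nlinarith
    nlinarith [mul_le_mul_of_nonneg_right hLA hLN.le,
      mul_le_mul_of_nonneg_left hA (by positivity : (0 : ℝ) ≤ (c + 2) * (N + 1))]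
  calc Real.exp (-(2 * c * (c + 2)) * (N + 1) / (L - N))
      ≤ Real.exp (-(c * ((L - A) / A))) := by
        rw [Real.exp_le_exp, neg_mul, neg_div, neg_le_neg_iff]
        calc c * ((L - A) / A) ≤ c * (2 * (c + 2) * (N + 1) / (L - N)) := by gcongr
          _ = 2 * c * (c + 2) * (N + 1) / (L - N) := by ring
    _ ≤ (A / L) ^ c := Real.exp_neg_mul_sub_div_le_rpow hApos (by linarith) hc.le
    _ ≤ ‖cGL c L u‖ := rpow_le_norm_cGL hc (by linarith) (by linarith)

theorem add_le_of_ceil_div_sub_one_le {r a L : ℝ} (hr : 1 < r) {N : ℕ}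
    (hN : ⌈a / (r - 1)⌉₊ ≤ N) (hL : r * N ≤ L) : N + a ≤ L := by
  have h := (Nat.ceil_le.1 hN)
  rw [div_le_iff₀ (sub_pos.2 hr)] at h
  linarith

theorem add_one_div_sub_le {r L N : ℝ} (hr : 1 < r) (hN : 1 ≤ N) (hL : r * N ≤ L) :
    (N + 1) / (L - N) ≤ 2 / (r - 1) := by
  rw [div_le_div_iff₀ (by nlinarith) (sub_pos.2 hr)]
  nlinarith

theorem cGL_lower_bound_general (c δ η : ℝ) (hc : 0 < c) (hδ : 0 < δ) :
    (∃ C : ℝ, 0 < C ∧ ∀ N : ℕ, 1 ≤ N → ∀ L : ℝ, (N : ℝ) + 2 * (c + 1) ≤ L →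
        ∀ u ∈ strip η δ N,
          Real.exp (-C * ((N : ℝ) + 1) / (L - N)) ≤ ‖cGL c L u‖) ∧
      ∀ r : ℝ, 1 < r → ∃ C' : ℝ, 0 < C' ∧ ∃ N₀ : ℕ, ∀ N : ℕ, N₀ ≤ N →
        ∀ L : ℝ, r * N ≤ L → ∀ u ∈ strip η δ N,
          Real.exp (-C') ≤ ‖cGL c L u‖ := by
  have hre : ∀ {N : ℕ}, ∀ u ∈ strip η δ N, u.re ≤ N := fun u hu => by linarith [hu.2.2]
  refine ⟨⟨2 * c * (c + 2), by positivity, fun N _ L hL u hu =>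
    exp_le_norm_cGL hc N.cast_nonneg hL (hre u hu)⟩, fun r hr => ?_⟩
  refine ⟨2 * c * (c + 2) * (2 / (r - 1)), by have := sub_pos.2 hr; positivity,
    max 1 ⌈2 * (c + 1) / (r - 1)⌉₊, fun N hN L hL u hu => ?_⟩
  have hN1 : (1 : ℝ) ≤ N := by exact_mod_cast (le_max_left _ _).trans hN
  have hLN := add_le_of_ceil_div_sub_one_le hr ((le_max_right _ _).trans hN) hL
  refine le_trans ?_ (exp_le_norm_cGL hc N.cast_nonneg hLN (hre u hu))
  rw [Real.exp_le_exp, neg_mul, neg_div, neg_le_neg_iff, mul_div_assoc]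
  gcongr 2 * c * (c + 2) * ?_
  exact add_one_div_sub_le hr hN1 hL

/-- **Lower bound (6.5) of the paper's Lemma 6.6 (`lem:GL`)**, in the quantitative form
established by its proof.

Fix `c, δ, η > 0`. There is `C > 0` so that for all integers `N ≥ 1`, all reals
`L ≥ N + 2(c+1)` and all `u ∈ 𝔑_η^{(N)}`, `|₍c₎G_L(u)| ≥ exp(−C(N+1)/(L−N))`.
In particular, for every `r > 1` there are `C' > 0` and `N₀` with
`|₍c₎G_L(u)| ≥ e^{−C'}` for all `u ∈ 𝔑_η^{(N)}` whenever `L ≥ rN` and `N ≥ N₀`. -/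
theorem cGL_lower_bound (c δ η : ℝ) (hc : 0 < c) (hδ : 0 < δ) (hη : 0 < η) :
    (∃ C : ℝ, 0 < C ∧ ∀ N : ℕ, 1 ≤ N → ∀ L : ℝ, (N : ℝ) + 2 * (c + 1) ≤ L →
        ∀ u ∈ strip η δ N,
          Real.exp (-C * ((N : ℝ) + 1) / (L - N)) ≤ ‖cGL c L u‖) ∧
      ∀ r : ℝ, 1 < r → ∃ C' : ℝ, 0 < C' ∧ ∃ N₀ : ℕ, ∀ N : ℕ, N₀ ≤ N →
        ∀ L : ℝ, r * N ≤ L → ∀ u ∈ strip η δ N,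
          Real.exp (-C') ≤ ‖cGL c L u‖ :=
  cGL_lower_bound_general c δ η hc hδ
end

section
/- Let m ≥ 1 and let c_{ij} ∈ ℂ for 1 ≤ i < j ≤ m (set c_{ji} := c_{ij}). Then ∑_{π = {S_1,…,S_d}} (−1)^{d−1} (d−1)! ∏_{ℓ=1}^d ∏_{i<j, i,j ∈ S_ℓ} c_{ij} = ∑_{Ω} ∏_{ {i,j} ∈ E(Ω), i<j } ( c_{ij} − 1 ), where the left sum runs over all set partitions π of {1,…,m} into nonempty blocks, and the right sum runs over all connected simple graphs Ω on the vertex set {1,…,m}, with E(Ω) the edge set of Ω (empty products equal 1). -/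
/-!
Expanding each `c i j = (c i j - 1) + 1` writes the weight of a partition `P` as a sum over the
graphs `Ω` whose edges stay inside blocks of `P`. Exchanging the two sums, the coefficient of `Ω`
is the sum of `(-1)^(d-1) (d-1)!` over the partitions coarser than the partition into connected
components of `Ω`, i.e. over all partitions of the set of components. That sum is `1` for a single
component and `0` otherwise: a partition of `insert a s` arises from a partition of `s` with `d`
blocks either by adding the block `{a}` or by putting `a` into one of the `d` blocks, and
`(-1)^d d! + d (-1)^(d-1) (d-1)! = 0` for `d ≥ 1`.
-/

open scoped Classical

/-- `P` is a set partition of `{1,…,m}` (as `Finset.univ : Finset (Fin m)`). -/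
def IsSetPartition {m : ℕ} (P : Finset (Finset (Fin m))) : Prop :=
  (∀ T ∈ P, T.Nonempty) ∧ (∀ T ∈ P, ∀ T' ∈ P, T ≠ T' → Disjoint T T') ∧
    (∀ i : Fin m, ∃ T ∈ P, i ∈ T)

open Finset Nat

namespace Finset

variable {α : Type*} [DecidableEq α] {s : Finset α} {P Q : Finset (Finset α)}

noncomputable def partitions (s : Finset α) : Finset (Finset (Finset α)) :=
  univ.image (Finpartition.parts : Finpartition s → _)

theorem mem_partitions :
    P ∈ s.partitions ↔ (P : Set (Finset α)).PairwiseDisjoint id ∧ P.sup id = s ∧ ∅ ∉ P := by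
  refine ⟨fun hP => ?_, fun ⟨hdisj, hsup, hbot⟩ => ?_⟩
  · obtain ⟨P, -, rfl⟩ := mem_image.1 hP
    exact ⟨P.disjoint, P.sup_parts, P.empty_notMem_parts⟩
  · exact mem_image.2 ⟨⟨P, supIndep_iff_pairwiseDisjoint.2 hdisj, hsup, hbot⟩, mem_univ _, rfl⟩

theorem empty_mem_partitions_iff : ∅ ∈ s.partitions ↔ s = ∅ := by
  simp [mem_partitions, eq_comm]

namespace partitions

theorem subset (hP : P ∈ s.partitions) {t : Finset α} (ht : t ∈ P) : t ⊆ s :=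
  (mem_partitions.1 hP).2.1 ▸ le_sup (f := id) ht

theorem nonempty (hP : P ∈ s.partitions) {t : Finset α} (ht : t ∈ P) : t.Nonempty :=
  nonempty_iff_ne_empty.2 fun h => (mem_partitions.1 hP).2.2 (h ▸ ht)

theorem eq_of_mem (hP : P ∈ s.partitions) {t u : Finset α} {a : α} (ht : t ∈ P) (hu : u ∈ P)
    (hat : a ∈ t) (hau : a ∈ u) : t = u :=
  (mem_partitions.1 hP).1.elim_finset ht hu a hat hau

theorem exists_mem (hP : P ∈ s.partitions) {a : α} (ha : a ∈ s) : ∃ t ∈ P, a ∈ t := by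
  rw [← (mem_partitions.1 hP).2.1] at ha
  simpa using mem_sup.1 ha

end partitions

theorem image_sdiff_erase_empty_mem_partitions (hP : P ∈ s.partitions) (t : Finset α) :
    (P.image (· \ t)).erase ∅ ∈ (s \ t).partitions := by
  obtain ⟨P, -, rfl⟩ := mem_image.1 hP
  exact mem_image.2 ⟨P.avoid t, mem_univ _, rfl⟩

section Insert

/-! A partition of `insert a s` is `insert (insert a B) (Q.erase B)` for a unique partition `Q`
of `s` and a unique `B ∈ insert ∅ Q`: `B = ∅` makes `{a}` a new block, `B ∈ Q` adds `a` to `B`. -/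

variable {a : α} {B : Finset α}

theorem subset_of_mem_insert_empty (hQ : Q ∈ s.partitions) (hB : B ∈ insert ∅ Q) : B ⊆ s := by
  rcases mem_insert.1 hB with rfl | hB
  · exact empty_subset s
  · exact partitions.subset hQ hB

theorem union_sup_erase_of_mem_insert_empty (hB : B ∈ insert ∅ Q) :
    B ∪ (Q.erase B).sup id = Q.sup id := by
  rcases mem_insert.1 hB with rfl | hB
  · exact (empty_union _).trans (sup_erase_bot Q)
  · exact (sup_insert (f := id)).symm.trans (congrArg (sup · id) (insert_erase hB))

theorem erase_empty_insert_erase (hQ : Q ∈ s.partitions) (hB : B ∈ insert ∅ Q) :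
    (insert B (Q.erase B)).erase ∅ = Q := by
  have hbot := (mem_partitions.1 hQ).2.2
  rcases mem_insert.1 hB with rfl | hB
  · rw [erase_insert (notMem_erase ∅ Q), erase_eq_of_notMem hbot]
  · rw [insert_erase hB, erase_eq_of_notMem hbot]

theorem insert_insert_notMem_erase (ha : a ∉ s) (hQ : Q ∈ s.partitions) (B : Finset α) :
    insert a B ∉ Q.erase B :=
  fun h => ha (partitions.subset hQ (mem_of_mem_erase h) (mem_insert_self a B))

theorem insert_insert_erase_mem_partitions (ha : a ∉ s) (hQ : Q ∈ s.partitions)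
    (hB : B ∈ insert ∅ Q) : insert (insert a B) (Q.erase B) ∈ (insert a s).partitions := by
  obtain ⟨hdisj, hsup, hbot⟩ := mem_partitions.1 hQ
  rw [mem_partitions, coe_insert]
  refine ⟨(hdisj.subset (coe_subset.2 (erase_subset _ _))).insert fun t ht _ => ?_, ?_, ?_⟩
  · obtain ⟨htB, htQ⟩ := mem_erase.1 ht
    refine disjoint_insert_left.2 ⟨fun hat => ha (partitions.subset hQ htQ hat), ?_⟩
    rcases mem_insert.1 hB with rfl | hB
    · exact disjoint_empty_left _
    · exact hdisj hB htQ (Ne.symm htB)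
  · rw [sup_insert, id, sup_eq_union, insert_union, union_sup_erase_of_mem_insert_empty hB, hsup]
  · simp [hbot, (insert_ne_empty a B).symm]

theorem eq_of_insert_insert_erase_eq (ha : a ∉ s) {Q' : Finset (Finset α)} {B' : Finset α}
    (hQ : Q ∈ s.partitions) (hB : B ∈ insert ∅ Q) (hQ' : Q' ∈ s.partitions)
    (hB' : B' ∈ insert ∅ Q')
    (h : insert (insert a B) (Q.erase B) = insert (insert a B') (Q'.erase B')) :
    Q = Q' ∧ B = B' := by
  have hblock : insert a B = insert a B' :=
    partitions.eq_of_mem (insert_insert_erase_mem_partitions ha hQ hB) (mem_insert_self _ _)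
      (h ▸ mem_insert_self _ _) (mem_insert_self a B) (mem_insert_self a B')
  obtain rfl : B = B' := by
    rw [← erase_insert fun h => ha (subset_of_mem_insert_empty hQ hB h), hblock,
      erase_insert fun h => ha (subset_of_mem_insert_empty hQ' hB' h)]
  have hrest : Q.erase B = Q'.erase B := by
    simpa only [erase_insert (insert_insert_notMem_erase ha hQ B),
      erase_insert (insert_insert_notMem_erase ha hQ' B)] using congrArg (·.erase (insert a B)) h
  refine ⟨?_, rfl⟩
  rw [← erase_empty_insert_erase hQ hB, hrest, erase_empty_insert_erase hQ' hB']

theorem exists_insert_insert_erase_eq (ha : a ∉ s) (hP : P ∈ (insert a s).partitions) :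
    ∃ Q ∈ s.partitions, ∃ B ∈ insert ∅ Q, insert (insert a B) (Q.erase B) = P := by
  obtain ⟨T, hT, haT⟩ := partitions.exists_mem hP (mem_insert_self a s)
  have hQ := image_sdiff_erase_empty_mem_partitions hP {a}
  simp only [sdiff_singleton_eq_erase, erase_insert ha] at hQ
  set Q := (P.image (·.erase a)).erase ∅
  refine ⟨Q, hQ, T.erase a, ?_, ?_⟩
  · by_cases hB : T.erase a = ∅
    · exact hB ▸ mem_insert_self _ _
    · exact mem_insert_of_mem (mem_erase.2 ⟨hB, mem_image_of_mem _ hT⟩)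
  have haX {X : Finset α} (hX : X ∈ P) (hXT : X ≠ T) : a ∉ X :=
    fun h => hXT (partitions.eq_of_mem hP hX hT h haT)
  have hrest : Q.erase (T.erase a) = P.erase T := by
    ext X
    simp only [Q, mem_erase, mem_image]
    constructor
    · rintro ⟨hXB, -, Y, hY, rfl⟩
      have hYT : Y ≠ T := by rintro rfl; exact hXB rfl
      rw [erase_eq_of_notMem (haX hY hYT)]
      exact ⟨hYT, hY⟩
    · rintro ⟨hXT, hX⟩
      refine ⟨fun h => hXT ?_, (partitions.nonempty hP hX).ne_empty, X, hX,
        erase_eq_of_notMem (haX hX hXT)⟩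
      obtain ⟨x, hx⟩ := partitions.nonempty hP hX
      exact partitions.eq_of_mem hP hX hT hx (mem_of_mem_erase (h ▸ hx))
  rw [hrest, insert_erase haT, insert_erase hT]

theorem sum_partitions_insert {M : Type*} [AddCommMonoid M] (ha : a ∉ s)
    (f : Finset (Finset α) → M) :
    ∑ P ∈ (insert a s).partitions, f P =
      ∑ Q ∈ s.partitions, ∑ B ∈ insert ∅ Q, f (insert (insert a B) (Q.erase B)) := by
  rw [sum_sigma']
  refine (sum_bij (fun x _ => insert (insert a x.2) (x.1.erase x.2)) ?_ ?_ ?_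
    fun _ _ => rfl).symm
  · rintro ⟨Q, B⟩ h
    exact insert_insert_erase_mem_partitions ha (mem_sigma.1 h).1 (mem_sigma.1 h).2
  · rintro ⟨Q, B⟩ h ⟨Q', B'⟩ h' heq
    obtain ⟨rfl, rfl⟩ := eq_of_insert_insert_erase_eq ha (mem_sigma.1 h).1 (mem_sigma.1 h).2
      (mem_sigma.1 h').1 (mem_sigma.1 h').2 heq
    rfl
  · intro P hP
    obtain ⟨Q, hQ, B, hB, rfl⟩ := exists_insert_insert_erase_eq ha hP
    exact ⟨⟨Q, B⟩, mem_sigma.2 ⟨hQ, hB⟩, rfl⟩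

variable {R : Type*} [CommRing R]

theorem neg_one_pow_mul_factorial_add (d : ℕ) :
    (-1 : R) ^ (d + 1 - 1) * ((d + 1 - 1)! : R) + d * ((-1) ^ (d - 1) * ((d - 1)! : R)) =
      if d = 0 then 1 else 0 := by
  rcases d with _ | d
  · simp
  · simp only [add_tsub_cancel_right, factorial_succ, pow_succ, cast_mul, cast_add, cast_one,
      add_eq_zero, one_ne_zero, and_false, if_false]
    ring

theorem sum_partitions_insert_neg_one_pow_mul_factorial (ha : a ∉ s) :
    ∑ P ∈ (insert a s).partitions, (-1 : R) ^ (#P - 1) * ((#P - 1)! : R) =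
      if s = ∅ then 1 else 0 := by
  rw [sum_partitions_insert ha]
  trans ∑ Q ∈ s.partitions, if Q = ∅ then (1 : R) else 0
  swap
  · simp only [sum_ite_eq', empty_mem_partitions_iff]
  refine sum_congr rfl fun Q hQ => ?_
  have hbot := (mem_partitions.1 hQ).2.2
  have hcard (B : Finset α) : #(insert (insert a B) (Q.erase B)) = #(Q.erase B) + 1 :=
    card_insert_of_notMem (insert_insert_notMem_erase ha hQ B)
  rw [sum_insert hbot, hcard, erase_eq_of_notMem hbot,
    sum_congr rfl fun B hB => by rw [hcard, card_erase_add_one hB], sum_const, nsmul_eq_mul,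
    neg_one_pow_mul_factorial_add]
  simp only [card_eq_zero]

theorem sum_partitions_neg_one_pow_mul_factorial (hs : s.Nonempty) :
    ∑ P ∈ s.partitions, (-1 : R) ^ (#P - 1) * ((#P - 1)! : R) = if #s = 1 then 1 else 0 := by
  obtain ⟨a, ha⟩ := hs
  rw [← insert_erase ha, sum_partitions_insert_neg_one_pow_mul_factorial (notMem_erase a s),
    card_insert_of_notMem (notMem_erase a s)]
  simp

end Insert

section Refines

def Refines (π P : Finset (Finset α)) : Prop := ∀ B ∈ π, ∃ T ∈ P, B ⊆ T

variable {π : Finset (Finset α)}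

theorem sup_filter_subset_eq (hπ : π ∈ s.partitions) (hP : P ∈ s.partitions)
    (hπP : π.Refines P) {T : Finset α} (hT : T ∈ P) : (π.filter (· ⊆ T)).sup id = T := by
  refine (Finset.sup_le fun B hB => (mem_filter.1 hB).2).antisymm fun x hx => ?_
  obtain ⟨B, hB, hxB⟩ := partitions.exists_mem hπ (partitions.subset hP hT hx)
  obtain ⟨T', hT', hBT'⟩ := hπP B hB
  obtain rfl := partitions.eq_of_mem hP hT' hT (hBT' hxB) hx
  exact mem_sup.2 ⟨B, mem_filter.2 ⟨hB, hBT'⟩, hxB⟩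

theorem filter_subset_sup_eq (hπ : π ∈ s.partitions) {R : Finset (Finset (Finset α))}
    (hR : R ∈ π.partitions) {r : Finset (Finset α)} (hr : r ∈ R) :
    π.filter (· ⊆ r.sup id) = r := by
  ext B
  rw [mem_filter]
  refine ⟨fun ⟨hB, hBr⟩ => ?_, fun hB => ⟨partitions.subset hR hr hB, le_sup (f := id) hB⟩⟩
  obtain ⟨x, hx⟩ := partitions.nonempty hπ hB
  obtain ⟨B', hB', hxB'⟩ := mem_sup.1 (hBr hx)
  rwa [partitions.eq_of_mem hπ hB (partitions.subset hR hr hB') hx hxB']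

theorem image_filter_subset_mem_partitions (hπ : π ∈ s.partitions) (hP : P ∈ s.partitions)
    (hπP : π.Refines P) : P.image (fun T => π.filter (· ⊆ T)) ∈ π.partitions := by
  refine mem_partitions.2 ⟨?_, ?_, fun h => ?_⟩
  · rintro _ hX _ hY hXY
    obtain ⟨T, hT, rfl⟩ := mem_image.1 hX
    obtain ⟨T', hT', rfl⟩ := mem_image.1 hY
    refine disjoint_left.2 fun B hB hB' => hXY ?_
    obtain ⟨x, hx⟩ := partitions.nonempty hπ (mem_filter.1 hB).1
    rw [partitions.eq_of_mem hP hT hT' ((mem_filter.1 hB).2 hx) ((mem_filter.1 hB').2 hx)]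
  · ext B
    simp only [mem_sup, mem_image, id, exists_exists_and_eq_and, mem_filter]
    exact ⟨fun ⟨_, _, hB, _⟩ => hB, fun hB => (hπP B hB).imp fun _ h => ⟨h.1, hB, h.2⟩⟩
  · obtain ⟨T, hT, hTe⟩ := mem_image.1 h
    rw [← sup_filter_subset_eq hπ hP hπP hT, hTe] at hT
    exact (mem_partitions.1 hP).2.2 hT

theorem image_sup_mem_partitions (hπ : π ∈ s.partitions) {R : Finset (Finset (Finset α))}
    (hR : R ∈ π.partitions) : R.image (·.sup id) ∈ s.partitions := by
  refine mem_partitions.2 ⟨?_, ?_, fun h => ?_⟩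
  · rintro _ hX _ hY hXY
    obtain ⟨r, hr, rfl⟩ := mem_image.1 hX
    obtain ⟨r', hr', rfl⟩ := mem_image.1 hY
    have hrr' : r ≠ r' := by rintro rfl; exact hXY rfl
    refine Finset.disjoint_sup_left.2 fun B hB => Finset.disjoint_sup_right.2 fun B' hB' => ?_
    refine (mem_partitions.1 hπ).1 (partitions.subset hR hr hB) (partitions.subset hR hr' hB') ?_
    rintro rfl
    exact hrr' (partitions.eq_of_mem hR hr hr' hB hB')
  · rw [← (mem_partitions.1 hπ).2.1, ← (mem_partitions.1 hR).2.1, sup_image]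
    ext x
    simp only [mem_sup, Function.comp, id]
    exact ⟨fun ⟨r, hr, B, hB, hx⟩ => ⟨B, ⟨r, hr, hB⟩, hx⟩,
      fun ⟨B, ⟨r, hr, hB⟩, hx⟩ => ⟨r, hr, B, hB, hx⟩⟩
  · obtain ⟨r, hr, hre⟩ := mem_image.1 h
    obtain ⟨B, hB⟩ := partitions.nonempty hR hr
    obtain ⟨x, hx⟩ := partitions.nonempty hπ (partitions.subset hR hr hB)
    exact notMem_empty x (hre ▸ mem_sup.2 ⟨B, hB, hx⟩)

theorem sum_partitions_refines {M : Type*} [AddCommMonoid M] (hπ : π ∈ s.partitions)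
    (f : ℕ → M) : ∑ P ∈ s.partitions with π.Refines P, f #P = ∑ R ∈ π.partitions, f #R := by
  refine sum_nbij' (fun P => P.image fun T => π.filter (· ⊆ T)) (fun R => R.image (·.sup id))
    (fun P hP => ?_) (fun R hR => ?_) (fun P hP => ?_) (fun R hR => ?_) (fun P hP => ?_)
  · exact image_filter_subset_mem_partitions hπ (mem_filter.1 hP).1 (mem_filter.1 hP).2
  · refine mem_filter.2 ⟨image_sup_mem_partitions hπ hR, fun B hB => ?_⟩
    obtain ⟨r, hr, hBr⟩ := partitions.exists_mem hR hB
    exact ⟨r.sup id, mem_image_of_mem _ hr, le_sup (f := id) hBr⟩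
  · obtain ⟨hP, hπP⟩ := mem_filter.1 hP
    rw [image_image]
    exact (image_congr fun T hT => sup_filter_subset_eq hπ hP hπP hT).trans image_id
  · rw [image_image]
    exact (image_congr fun r hr => filter_subset_sup_eq hπ hR hr).trans image_id
  · obtain ⟨hP, hπP⟩ := mem_filter.1 hP
    refine congrArg f (card_image_of_injOn fun T hT T' hT' h => ?_).symm
    rw [← sup_filter_subset_eq hπ hP hπP hT, ← sup_filter_subset_eq hπ hP hπP hT']
    exact congrArg (sup · id) h

end Refines

end Finset

namespace SimpleGraph

variable {V : Type*} [Fintype V]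

def blockGraph (P : Finset (Finset V)) : SimpleGraph V where
  Adj u v := u ≠ v ∧ ∃ T ∈ P, u ∈ T ∧ v ∈ T
  symm := ⟨fun _ _ ⟨huv, T, hT, hu, hv⟩ => ⟨huv.symm, T, hT, hv, hu⟩⟩
  loopless := ⟨fun _ h => h.1 rfl⟩

section Components

variable [DecidableEq V] (G : SimpleGraph V)

noncomputable def componentBlocks : Finset (Finset V) :=
  univ.image fun v => univ.filter (G.Reachable v)

theorem filter_reachable_eq_iff {u v : V} :
    univ.filter (G.Reachable u) = univ.filter (G.Reachable v) ↔ G.Reachable u v := by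
  refine ⟨fun h => ?_, fun h => ?_⟩
  · simpa [← h] using mem_filter.2 ⟨mem_univ v, Reachable.refl (G := G) v⟩
  · ext w
    simp only [mem_filter, mem_univ, true_and]
    exact ⟨h.symm.trans, h.trans⟩

theorem componentBlocks_mem_partitions : G.componentBlocks ∈ (univ : Finset V).partitions := by
  refine mem_partitions.2 ⟨?_, eq_univ_iff_forall.2 fun v => ?_, fun h => ?_⟩
  · rintro _ hX _ hY hXY
    obtain ⟨u, -, rfl⟩ := mem_image.1 hX
    obtain ⟨v, -, rfl⟩ := mem_image.1 hY
    refine Finset.disjoint_left.2 fun w hu hv => hXY ((G.filter_reachable_eq_iff).2 ?_)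
    simp only [id, mem_filter, mem_univ, true_and] at hu hv
    exact hu.trans hv.symm
  · exact mem_sup.2 ⟨_, mem_image_of_mem _ (mem_univ v), by simp⟩
  · obtain ⟨v, -, hv⟩ := mem_image.1 h
    exact notMem_empty v (hv ▸ mem_filter.2 ⟨mem_univ v, Reachable.refl (G := G) v⟩)

theorem componentBlocks_nonempty [Nonempty V] : G.componentBlocks.Nonempty :=
  univ_nonempty.image _

theorem card_componentBlocks_eq_one_iff [Nonempty V] : #G.componentBlocks = 1 ↔ G.Connected := by
  have hpos : 0 < #G.componentBlocks := card_pos.2 G.componentBlocks_nonempty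
  rw [connected_iff, show #G.componentBlocks = 1 ↔ #G.componentBlocks ≤ 1 by omega, card_le_one]
  simp only [componentBlocks, forall_mem_image, mem_univ, true_implies, filter_reachable_eq_iff]
  simp [Preconnected, *]

theorem componentBlocks_refines_iff {P : Finset (Finset V)}
    (hP : P ∈ (univ : Finset V).partitions) : G.componentBlocks.Refines P ↔ G ≤ blockGraph P := by
  refine ⟨fun h u v huv => ?_, fun h X hX => ?_⟩
  · obtain ⟨T, hT, hsub⟩ := h _ (mem_image_of_mem _ (mem_univ u))
    exact ⟨G.ne_of_adj huv, T, hT, hsub (by simp), hsub (by simpa using huv.reachable)⟩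
  · obtain ⟨v, -, rfl⟩ := mem_image.1 hX
    obtain ⟨T, hT, hvT⟩ := partitions.exists_mem hP (mem_univ v)
    refine ⟨T, hT, fun w hw => ?_⟩
    simp only [mem_filter, mem_univ, true_and, reachable_iff_reflTransGen] at hw
    induction hw with
    | refl => exact hvT
    | tail _ hadj ih =>
      obtain ⟨-, T', hT', hb, hc⟩ := h hadj
      exact partitions.eq_of_mem hP hT' hT hb ih ▸ hc

theorem sum_partitions_le_blockGraph {R : Type*} [CommRing R] [Nonempty V] :
    ∑ P ∈ (univ : Finset V).partitions with G ≤ blockGraph P,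
        (-1 : R) ^ (#P - 1) * ((#P - 1)! : R) = if G.Connected then 1 else 0 := by
  rw [← filter_congr fun P hP => G.componentBlocks_refines_iff hP,
    sum_partitions_refines G.componentBlocks_mem_partitions fun d => (-1 : R) ^ (d - 1) * (d - 1)!,
    sum_partitions_neg_one_pow_mul_factorial G.componentBlocks_nonempty]
  exact if_congr G.card_componentBlocks_eq_one_iff rfl rfl

end Components

section EdgePairs

variable [LinearOrder V]

noncomputable def edgePairs (G : SimpleGraph V) : Finset (V × V) :=
  univ.filter fun p => p.1 < p.2 ∧ G.Adj p.1 p.2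

theorem lt_of_mem_edgePairs {G : SimpleGraph V} {p : V × V} (hp : p ∈ G.edgePairs) : p.1 < p.2 :=
  (mem_filter.1 hp).2.1

theorem edgePairs_mono {G H : SimpleGraph V} (h : G ≤ H) : G.edgePairs ⊆ H.edgePairs :=
  monotone_filter_right _ fun _ _ hp => ⟨hp.1, h hp.2⟩

theorem fromRel_edgePairs (G : SimpleGraph V) :
    fromRel (fun u v => (u, v) ∈ G.edgePairs) = G := by
  ext u v
  simp only [edgePairs, fromRel_adj, mem_filter, mem_univ, true_and]
  refine ⟨fun ⟨_, h⟩ => h.elim (·.2) (·.2.symm), fun h => ⟨h.ne, ?_⟩⟩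
  exact (h.ne.lt_or_gt).imp (⟨·, h⟩) (⟨·, h.symm⟩)

theorem edgePairs_fromRel {F : Finset (V × V)} (hF : ∀ p ∈ F, p.1 < p.2) :
    (fromRel fun u v => (u, v) ∈ F).edgePairs = F := by
  ext p
  simp only [edgePairs, fromRel_adj, mem_filter, mem_univ, true_and]
  refine ⟨fun ⟨hlt, _, h⟩ => h.resolve_right fun h' => (hF _ h').not_gt hlt, fun hp => ?_⟩
  exact ⟨hF p hp, (hF p hp).ne, Or.inl hp⟩

theorem prod_edgePairs_add_one {R : Type*} [CommSemiring R] (H : SimpleGraph V)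
    (x : V → V → R) :
    ∏ p ∈ H.edgePairs, (x p.1 p.2 + 1) = ∑ G with G ≤ H, ∏ p ∈ G.edgePairs, x p.1 p.2 := by
  rw [prod_add_one]
  refine sum_nbij' (fun F => fromRel fun u v => (u, v) ∈ F) edgePairs (fun F hF => ?_)
    (fun G hG => ?_) (fun F hF => ?_) (fun G _ => fromRel_edgePairs G) (fun F hF => ?_)
  · refine mem_filter.2 ⟨mem_univ _, fun u v ⟨_, huv⟩ => ?_⟩
    have hF := mem_powerset.1 hF
    exact huv.elim (fun h => (mem_filter.1 (hF h)).2.2) (fun h => (mem_filter.1 (hF h)).2.2.symm)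
  · exact mem_powerset.2 (edgePairs_mono (mem_filter.1 hG).2)
  · exact edgePairs_fromRel fun p hp => lt_of_mem_edgePairs (mem_powerset.1 hF hp)
  · rw [edgePairs_fromRel fun p hp => lt_of_mem_edgePairs (mem_powerset.1 hF hp)]

theorem prod_blocks_eq_prod_edgePairs_blockGraph {M : Type*} [CommMonoid M]
    {P : Finset (Finset V)} (hP : P ∈ (univ : Finset V).partitions) (c : V → V → M) :
    ∏ S ∈ P, ∏ p ∈ univ.filter (fun p : V × V => p.1 < p.2 ∧ p.1 ∈ S ∧ p.2 ∈ S), c p.1 p.2 =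
      ∏ p ∈ (blockGraph P).edgePairs, c p.1 p.2 := by
  rw [← prod_biUnion fun S hS S' hS' hSS' => Finset.disjoint_left.2 fun p hp hp' =>
    hSS' (partitions.eq_of_mem hP hS hS' (mem_filter.1 hp).2.2.1 (mem_filter.1 hp').2.2.1)]
  congr 1
  ext p
  simp only [edgePairs, mem_biUnion, mem_filter, mem_univ, true_and]
  exact ⟨fun ⟨S, hS, hlt, h1, h2⟩ => ⟨hlt, hlt.ne, S, hS, h1, h2⟩,
    fun ⟨hlt, _, S, hS, h1, h2⟩ => ⟨S, hS, hlt, h1, h2⟩⟩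

theorem sum_partitions_eq_sum_connected {R : Type*} [CommRing R] [Nonempty V] (c : V → V → R) :
    ∑ P ∈ (univ : Finset V).partitions, (-1 : R) ^ (#P - 1) * ((#P - 1)! : R) *
        ∏ S ∈ P, ∏ p ∈ univ.filter (fun p : V × V => p.1 < p.2 ∧ p.1 ∈ S ∧ p.2 ∈ S), c p.1 p.2 =
      ∑ G ∈ univ.filter (fun G : SimpleGraph V => G.Connected),
        ∏ p ∈ G.edgePairs, (c p.1 p.2 - 1) := by
  calc _ = ∑ P ∈ (univ : Finset V).partitions, ∑ G with G ≤ blockGraph P,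
        (-1 : R) ^ (#P - 1) * ((#P - 1)! : R) * ∏ p ∈ G.edgePairs, (c p.1 p.2 - 1) := by
        refine sum_congr rfl fun P hP => ?_
        rw [prod_blocks_eq_prod_edgePairs_blockGraph hP, ← mul_sum]
        simpa only [sub_add_cancel] using
          congrArg (_ * ·) (prod_edgePairs_add_one (blockGraph P) fun u v => c u v - 1)
    _ = ∑ G, ∑ P ∈ (univ : Finset V).partitions with G ≤ blockGraph P,
        (-1 : R) ^ (#P - 1) * ((#P - 1)! : R) * ∏ p ∈ G.edgePairs, (c p.1 p.2 - 1) :=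
        sum_comm' fun P G => by simp only [mem_filter, mem_univ, true_and, and_true]
    _ = ∑ G, (if G.Connected then 1 else 0) * ∏ p ∈ G.edgePairs, (c p.1 p.2 - 1) :=
        sum_congr rfl fun G _ => by rw [← sum_mul, sum_partitions_le_blockGraph]
    _ = _ := by simp only [sum_filter, ite_mul, one_mul, zero_mul]

end EdgePairs

end SimpleGraph

theorem isSetPartition_iff_mem_partitions {m : ℕ} {P : Finset (Finset (Fin m))} :
    IsSetPartition P ↔ P ∈ (univ : Finset (Fin m)).partitions := by
  refine ⟨fun ⟨hne, hdisj, hcov⟩ => mem_partitions.2 ⟨fun T hT T' hT' => hdisj T hT T' hT',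
    eq_univ_iff_forall.2 fun i => mem_sup.2 (hcov i), fun h => (hne ∅ h).ne_empty rfl⟩,
    fun hP => ⟨fun _ => partitions.nonempty hP, fun _ hT _ hT' => (mem_partitions.1 hP).1 hT hT',
      fun i => partitions.exists_mem hP (mem_univ i)⟩⟩

/-- **The identity (eq:mobius) from the paper's proof of Theorem 5.3.**

For weights `c_{ij}` (`i < j`),
`∑_{partitions {S_1,…,S_d}} (−1)^{d−1}(d−1)! ∏_ℓ ∏_{i<j ∈ S_ℓ} c_{ij}
  = ∑_{connected simple graphs Ω on {1,…,m}} ∏_{{i,j} ∈ E(Ω), i<j} (c_{ij} − 1)`. -/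
theorem partition_connected_graph_expansion (m : ℕ) (hm : 1 ≤ m)
    (c : Fin m → Fin m → ℂ) :
    ∑ P ∈ Finset.univ.filter (fun P : Finset (Finset (Fin m)) => IsSetPartition P),
        (-1 : ℂ) ^ (P.card - 1) * (Nat.factorial (P.card - 1) : ℂ) *
          ∏ S ∈ P, ∏ p ∈ Finset.univ.filter
              (fun p : Fin m × Fin m => p.1 < p.2 ∧ p.1 ∈ S ∧ p.2 ∈ S), c p.1 p.2
      = ∑ Ω ∈ Finset.univ.filter (fun Ω : SimpleGraph (Fin m) => Ω.Connected),
          ∏ p ∈ Finset.univ.filter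
              (fun p : Fin m × Fin m => p.1 < p.2 ∧ Ω.Adj p.1 p.2), (c p.1 p.2 - 1) := by
  have : Nonempty (Fin m) := ⟨⟨0, hm⟩⟩
  have hparts : univ.filter (fun P : Finset (Finset (Fin m)) => IsSetPartition P) =
      (univ : Finset (Fin m)).partitions := by
    ext P
    simp [isSetPartition_iff_mem_partitions]
  rw [hparts]
  exact SimpleGraph.sum_partitions_eq_sum_connected c
end

section
/- Fix c, δ, η > 0. There exists a constant C > 0 such that for all u ∈ ℂ with Re u ≥ −η, |Im u| ≤ η, dist(u, ℤ) ≥ δ and dist(u, ℤ − c) ≥ δ, one has |Γ(−u−c)/Γ(−u)| ≤ C · |1 + u + c|^{−c}. -/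
/-!
For bounded `Re u` the ratio is continuous on a compact set avoiding the poles, hence bounded.
For `Re u > 1`, Euler's reflection formula rewrites it as
`(sin πu / sin π(u+c)) · Γ(1+u) / Γ(1+u+c)`. The sine quotient is bounded since
`|sin z| ≤ cosh (Im z)` and `|sin πz| ≥ 2 dist(z, ℤ)` (Jordan's inequality), while
`Γ(1+u) / Γ(1+u+c) = B(c, 1+u) / Γ(c)` and `(1-t)^{Re u} ≤ e^{-t Re u}` bound the Beta integral by
`Γ(c) (Re u)^{-c}`. Both regimes give `≲ max(1, Re u)^{-c}`, and `|1+u+c| ≲ max(1, Re u)`.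
-/

open scoped Real

namespace Real

lemma two_mul_abs_le_abs_sin_pi_mul {x : ℝ} (hx : |x| ≤ 1 / 2) :
    2 * |x| ≤ |sin (π * x)| := by
  have h : |sin (π * x)| = |sin (π * |x|)| := by
    rcases abs_cases x with ⟨h, -⟩ | ⟨h, -⟩ <;> simp [h, sin_neg]
  calc 2 * |x| = 2 / π * (π * |x|) := by field_simp
    _ ≤ sin (π * |x|) := mul_le_sin (by positivity) (by nlinarith [pi_pos])
    _ ≤ |sin (π * x)| := h ▸ le_abs_self _

lemma two_mul_abs_le_abs_sinh_pi_mul (y : ℝ) : 2 * |y| ≤ |sinh (π * y)| := by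
  rw [abs_sinh, abs_mul, abs_of_pos pi_pos]
  refine le_trans ?_ (self_le_sinh_iff.mpr (by positivity))
  gcongr
  linarith [pi_gt_three]

lemma rpow_neg_le_mul_rpow_neg {a b k c : ℝ} (ha : 0 < a) (hb : 0 < b) (hab : a ≤ k * b)
    (hc : 0 ≤ c) : b ^ (-c) ≤ k ^ c * a ^ (-c) := by
  have hk : 0 < k := pos_of_mul_pos_left (ha.trans_le hab) hb.le
  calc b ^ (-c) = k ^ c * (k * b) ^ (-c) := by
        rw [mul_rpow hk.le hb.le, ← mul_assoc, ← rpow_add hk, add_neg_cancel, rpow_zero, one_mul]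
    _ ≤ k ^ c * a ^ (-c) :=
        mul_le_mul_of_nonneg_left (rpow_le_rpow_of_nonpos ha hab (neg_nonpos.mpr hc))
          (by positivity)

end Real

namespace Complex

lemma norm_sin_sq (z : ℂ) : ‖sin z‖ ^ 2 = Real.sin z.re ^ 2 + Real.sinh z.im ^ 2 := by
  have h : sin z =
      (Real.sin z.re * Real.cosh z.im : ℝ) + (Real.cos z.re * Real.sinh z.im : ℝ) * I := by
    rw [sin_eq]; push_cast; ring
  rw [h, Complex.sq_norm, normSq_add_mul_I]
  nlinarith [Real.sin_sq_add_cos_sq z.re, Real.cosh_sq z.im]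

lemma norm_sin_le_cosh_im (z : ℂ) : ‖sin z‖ ≤ Real.cosh z.im := by
  refine le_of_sq_le_sq ?_ (Real.cosh_pos _).le
  rw [norm_sin_sq, Real.cosh_sq]
  nlinarith [Real.sin_sq_le_one z.re]

lemma two_mul_norm_le_norm_sin_pi_mul {w : ℂ} (hw : |w.re| ≤ 1 / 2) :
    2 * ‖w‖ ≤ ‖sin (π * w)‖ := by
  refine le_of_sq_le_sq ?_ (norm_nonneg _)
  have hre := pow_le_pow_left₀ (by positivity) (Real.two_mul_abs_le_abs_sin_pi_mul hw) 2
  have him := pow_le_pow_left₀ (by positivity) (Real.two_mul_abs_le_abs_sinh_pi_mul w.im) 2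
  rw [mul_pow, sq_abs, sq_abs] at hre him
  rw [norm_sin_sq, mul_pow, Complex.sq_norm, normSq_apply]
  simp only [re_ofReal_mul, im_ofReal_mul]
  nlinarith

lemma norm_sin_periodic : Function.Periodic (fun z => ‖sin z‖) π := fun z => by
  simp only [sin_antiperiodic z, norm_neg]

lemma two_mul_le_norm_sin_pi_mul {δ : ℝ} {z : ℂ} (hz : ∀ n : ℤ, δ ≤ ‖z - n‖) :
    2 * δ ≤ ‖sin (π * z)‖ := by
  have hw : |(z - round z.re).re| ≤ 1 / 2 := by simpa using abs_sub_round z.re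
  calc 2 * δ ≤ 2 * ‖z - round z.re‖ := by gcongr; exact hz _
    _ ≤ ‖sin (π * (z - round z.re))‖ := two_mul_norm_le_norm_sin_pi_mul hw
    _ = ‖sin (π * z)‖ := by
      rw [mul_sub, mul_comm (π : ℂ) (round z.re : ℂ)]
      exact norm_sin_periodic.sub_int_mul_eq _

lemma Gamma_div_Gamma_eq_sin_div_sin_mul {z w : ℂ} (hz : Gamma (1 - z) ≠ 0)
    (hw : Gamma (1 - w) ≠ 0) :
    Gamma z / Gamma w = sin (π * w) / sin (π * z) * (Gamma (1 - w) / Gamma (1 - z)) := by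
  have reflect {s : ℂ} (hs : Gamma (1 - s) ≠ 0) : Gamma s = π / sin (π * s) / Gamma (1 - s) :=
    eq_div_of_mul_eq hs (Gamma_mul_Gamma_one_sub s)
  have hπ : (π : ℂ) ≠ 0 := ofReal_ne_zero.mpr Real.pi_ne_zero
  rw [reflect hz, reflect hw]
  simp only [div_eq_mul_inv, mul_inv, inv_inv]
  field_simp

open MeasureTheory Set in
lemma norm_betaIntegral_one_add_le {v u : ℂ} (hv : 0 < v.re) (hu : 0 < u.re) :
    ‖betaIntegral v (1 + u)‖ ≤ Real.Gamma v.re * u.re ^ (-v.re) := by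
  set g : ℝ → ℝ := fun t => t ^ (v.re - 1) * Real.exp (-(u.re * t))
  have hg : ∫ t in Ioi 0, g t = Real.Gamma v.re * u.re ^ (-v.re) := by
    rw [Real.integral_rpow_mul_exp_neg_mul_Ioi hv hu, one_div, Real.inv_rpow hu.le,
      ← Real.rpow_neg hu.le, mul_comm]
  have hg_int : IntegrableOn g (Ioi 0) :=
    Integrable.of_integral_ne_zero (hg ▸ (by positivity : 0 < Real.Gamma v.re * u.re ^ (-v.re)).ne')
  have hbound : ∀ t ∈ Ioc (0 : ℝ) 1,
      ‖(t : ℂ) ^ (v - 1) * (1 - (t : ℂ)) ^ (1 + u - 1)‖ ≤ g t := by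
    rintro t ⟨ht0, ht1⟩
    rw [norm_mul, add_sub_cancel_left, norm_cpow_eq_rpow_re_of_pos ht0, sub_re, one_re,
      ← ofReal_one, ← ofReal_sub, norm_cpow_eq_rpow_re_of_nonneg (sub_nonneg.mpr ht1) hu.ne']
    dsimp only [g]
    gcongr
    calc (1 - t) ^ u.re ≤ Real.exp (-t) ^ u.re := by gcongr; exact Real.one_sub_le_exp_neg t
      _ = Real.exp (-(u.re * t)) := by rw [← Real.exp_mul]; ring_nf
  calc ‖betaIntegral v (1 + u)‖ ≤ ∫ t in (0 : ℝ)..1, g t :=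
        intervalIntegral.norm_integral_le_of_norm_le zero_le_one (ae_of_all _ hbound)
          ((intervalIntegrable_iff_integrableOn_Ioc_of_le zero_le_one).mpr
            (hg_int.mono_set Ioc_subset_Ioi_self))
    _ ≤ ∫ t in Ioi 0, g t := by
        rw [intervalIntegral.integral_of_le zero_le_one]
        exact setIntegral_mono_set hg_int
          ((ae_restrict_iff' measurableSet_Ioi).mpr <| ae_of_all _ fun t (ht : 0 < t) =>
            mul_nonneg (Real.rpow_nonneg ht.le _) (Real.exp_pos _).le)
          Ioc_subset_Ioi_self.eventuallyLE
    _ = Real.Gamma v.re * u.re ^ (-v.re) := hg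

lemma norm_Gamma_one_add_div_le {c : ℝ} (hc : 0 < c) {u : ℂ} (hu : 0 < u.re) :
    ‖Gamma (1 + u) / Gamma (1 + u + c)‖ ≤ u.re ^ (-c) := by
  have hcre : 0 < (c : ℂ).re := by rwa [ofReal_re]
  have hΓc : 0 < Real.Gamma c := Real.Gamma_pos_of_pos hc
  have hbeta : Gamma (1 + u) / Gamma (1 + u + c) = betaIntegral c (1 + u) / Real.Gamma c := by
    rw [betaIntegral_eq_Gamma_mul_div _ _ hcre (by simp; linarith), Gamma_ofReal,
      add_comm (c : ℂ), mul_div_assoc, mul_div_cancel_left₀ _ (ofReal_ne_zero.mpr hΓc.ne')]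
  rw [hbeta, norm_div, norm_real, Real.norm_of_nonneg hΓc.le, div_le_iff₀ hΓc, mul_comm]
  simpa only [ofReal_re] using norm_betaIntegral_one_add_le hcre hu

lemma norm_Gamma_neg_sub_div_Gamma_neg_le {c δ : ℝ} (hc : 0 < c) (hδ : 0 < δ) {u : ℂ}
    (hu : 0 < u.re) (hdist : ∀ n : ℤ, δ ≤ ‖u + c - n‖) :
    ‖Gamma (-u - c) / Gamma (-u)‖ ≤ Real.cosh (π * u.im) / (2 * δ) * u.re ^ (-c) := by
  have e₁ : 1 - (-u - c) = 1 + u + c := by ring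
  have e₂ : 1 - -u = 1 + u := by ring
  have hΓ₁ : Gamma (1 + u + c) ≠ 0 := Gamma_ne_zero_of_re_pos (by simp; linarith)
  have hΓ₂ : Gamma (1 + u) ≠ 0 := Gamma_ne_zero_of_re_pos (by simp; linarith)
  have hsin_le : ‖sin (π * -u)‖ ≤ Real.cosh (π * u.im) := by
    simpa using norm_sin_le_cosh_im (π * -u)
  have hsin_ge : 2 * δ ≤ ‖sin (π * (-u - c))‖ := by
    rw [← neg_add', mul_neg, sin_neg, norm_neg]
    exact two_mul_le_norm_sin_pi_mul hdist
  rw [Gamma_div_Gamma_eq_sin_div_sin_mul (e₁ ▸ hΓ₁) (e₂ ▸ hΓ₂), e₁, e₂, norm_mul, norm_div]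
  exact mul_le_mul (div_le_div₀ (Real.cosh_pos _).le hsin_le (by positivity) hsin_ge)
    (norm_Gamma_one_add_div_le hc hu) (norm_nonneg _) (by positivity)

lemma neg_ne_neg_natCast_of_forall_le_norm_sub {δ : ℝ} (hδ : 0 < δ) {z : ℂ}
    (hz : ∀ n : ℤ, δ ≤ ‖z - n‖) (m : ℕ) : -z ≠ -m := by
  intro h
  have := hz m
  rw [neg_inj.mp h, Int.cast_natCast, sub_self, norm_zero] at this
  exact this.not_gt hδ

lemma exists_bound_norm_Gamma_neg_sub_div_Gamma_neg {K : Set ℂ} (hK : IsCompact K) (c : ℝ)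
    {δ : ℝ} (hδ : 0 < δ) :
    ∃ B, ∀ u ∈ K, (∀ n : ℤ, δ ≤ ‖u - n‖) → (∀ n : ℤ, δ ≤ ‖u + c - n‖) →
      ‖Gamma (-u - c) / Gamma (-u)‖ ≤ B := by
  set S := {u : ℂ | ∀ n : ℤ, δ ≤ ‖u - n‖ ∧ δ ≤ ‖u + c - n‖}
  have hS : IsClosed S := by
    simp only [S, Set.ofPred_forall, Set.ofPred_and]
    exact isClosed_iInter fun n => (isClosed_le continuous_const (by fun_prop)).inter
      (isClosed_le continuous_const (by fun_prop))
  have hcont : ContinuousOn (fun u => Gamma (-u - c) / Gamma (-u)) (K ∩ S) := by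
    rintro u ⟨-, hu⟩
    have h₁ := neg_ne_neg_natCast_of_forall_le_norm_sub hδ fun n => (hu n).1
    have h₂ := neg_ne_neg_natCast_of_forall_le_norm_sub hδ fun n => (hu n).2
    rw [neg_add'] at h₂
    refine ContinuousAt.continuousWithinAt (.div ?_ ?_ (Gamma_ne_zero h₁))
    · exact (differentiableAt_Gamma _ h₂).continuousAt.comp (f := fun u : ℂ => -u - c)
        (by fun_prop)
    · exact (differentiableAt_Gamma _ h₁).continuousAt.comp (f := fun u : ℂ => -u) (by fun_prop)
  obtain ⟨B, hB⟩ := (hK.inter_right hS).exists_bound_of_continuousOn hcont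
  exact ⟨B, fun u hu h₁ h₂ => hB u ⟨hu, fun n => ⟨h₁ n, h₂ n⟩⟩⟩

lemma exists_norm_Gamma_neg_sub_div_Gamma_neg_le_max_rpow {c δ η : ℝ} (hc : 0 < c)
    (hδ : 0 < δ) (hη : 0 < η) :
    ∃ K > 0, ∀ u : ℂ, -η ≤ u.re → |u.im| ≤ η →
      (∀ n : ℤ, δ ≤ ‖u - n‖) → (∀ n : ℤ, δ ≤ ‖u + c - n‖) →
      ‖Gamma (-u - c) / Gamma (-u)‖ ≤ K * max 1 u.re ^ (-c) := by
  obtain ⟨B, hB⟩ := exists_bound_norm_Gamma_neg_sub_div_Gamma_neg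
    ((isCompact_Icc (a := -η) (b := 1)).reProdIm (isCompact_Icc (a := -η) (b := η))) c hδ
  refine ⟨max B (Real.cosh (π * η) / (2 * δ)), lt_max_of_lt_right (by positivity),
    fun u hre him hdist hdist_c => ?_⟩
  rcases le_or_gt u.re 1 with h | h
  · rw [max_eq_left h, Real.one_rpow, mul_one]
    exact (hB u ⟨⟨hre, h⟩, abs_le.mp him⟩ hdist hdist_c).trans (le_max_left _ _)
  · rw [max_eq_right h.le]
    refine (norm_Gamma_neg_sub_div_Gamma_neg_le hc hδ (by linarith) hdist_c).trans ?_
    refine mul_le_mul_of_nonneg_right (le_trans ?_ (le_max_right _ _)) (by positivity)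
    gcongr
    exact Real.cosh_le_cosh.mpr (by rw [abs_mul, abs_mul, abs_of_pos hη]; gcongr)

lemma norm_one_add_add_le {c η : ℝ} (hc : 0 ≤ c) {u : ℂ} (hre : -η ≤ u.re) (him : |u.im| ≤ η) :
    ‖1 + u + c‖ ≤ (2 + c + 2 * η) * max 1 u.re := by
  have h := norm_le_abs_re_add_abs_im (1 + u + c)
  simp only [add_re, add_im, one_re, one_im, ofReal_re, ofReal_im, zero_add, add_zero] at h
  have hη : 0 ≤ η := (abs_nonneg _).trans him
  have h₁ : 1 ≤ max 1 u.re := le_max_left _ _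
  have h₂ : u.re ≤ max 1 u.re := le_max_right _ _
  have h₃ : |1 + u.re + c| ≤ 1 + c + max 1 u.re + η := abs_le.mpr ⟨by linarith, by linarith⟩
  nlinarith [mul_nonneg (by linarith : 0 ≤ 1 + c + 2 * η) (sub_nonneg.mpr h₁)]

end Complex

/-- **The bound (eq:preJ_bd) from the paper's proof of its β = 2 edge-fluctuation theorems.**

Fix `c, δ, η > 0`. There is `C > 0` such that for every `u ∈ ℂ` with `Re u ≥ −η`,
`|Im u| ≤ η`, `dist(u, ℤ) ≥ δ` and `dist(u, ℤ − c) ≥ δ`, one has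
`|Γ(−u−c)/Γ(−u)| ≤ C · |1+u+c|^{−c}`. -/
theorem gamma_ratio_bound_on_strip (c δ η : ℝ) (hc : 0 < c) (hδ : 0 < δ) (hη : 0 < η) :
    ∃ C : ℝ, 0 < C ∧ ∀ u : ℂ, -η ≤ u.re → |u.im| ≤ η →
      (∀ n : ℤ, δ ≤ ‖u - (n : ℂ)‖) →
      (∀ n : ℤ, δ ≤ ‖u - ((n : ℂ) - c)‖) →
      ‖Complex.Gamma (-u - c) / Complex.Gamma (-u)‖
        ≤ C * ‖1 + u + c‖ ^ (-c) := by
  obtain ⟨K, hK, hbound⟩ := Complex.exists_norm_Gamma_neg_sub_div_Gamma_neg_le_max_rpow hc hδ hη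
  refine ⟨K * (2 + c + 2 * η) ^ c, by positivity, fun u hre him hdist hdist_c => ?_⟩
  replace hdist_c : ∀ n : ℤ, δ ≤ ‖u + c - n‖ := fun n => by convert hdist_c n using 2; ring
  have hpos : 0 < ‖1 + u + c‖ := by
    have := hdist_c (-1)
    rw [show u + c - ((-1 : ℤ) : ℂ) = 1 + u + c by push_cast; ring] at this
    linarith
  calc _ ≤ K * max 1 u.re ^ (-c) := hbound u hre him hdist hdist_c
    _ ≤ K * ((2 + c + 2 * η) ^ c * ‖1 + u + c‖ ^ (-c)) := by
        gcongr
        exact Real.rpow_neg_le_mul_rpow_neg hpos (by positivity)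
          (Complex.norm_one_add_add_le hc.le hre him) hc.le
    _ = _ := by ring
end

section
/- Fix c > 0, a > 0, b > 0 and γ > 0. For each N ≥ 1 let (α_τ(N))_{τ≥1} be reals with α_τ(N) ≥ a, let (M_τ(N))_{τ≥1} be positive integers with M_τ(N) ≥ bN, and let T(N) be positive integers such that lim_{N→∞} ∑_{τ=1}^{T(N)} ( 1/(N + α_τ(N) − 1) − 1/(N + M_τ(N) + α_τ(N) − 1) ) = γ. Then for every u ∈ ℂ, lim_{N→∞} ₍c₎G_N(u) · ∏_{τ=1}^{T(N)} ₍c₎G_{N+α_τ(N)−1}(u) / ₍c₎G_{N+M_τ(N)+α_τ(N)−1}(u) = exp( −γ ( c(c+1)/2 + c·u ) ) (for each fixed u the expression is well defined for all sufficiently large N). -/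
open Filter Topology Asymptotics Complex Finset
open scoped Nat

namespace Complex

lemma ne_neg_natCast_of_re_pos {z : ℂ} (hz : 0 < z.re) (k : ℕ) : z ≠ -k := by
  rintro rfl
  simp at hz
  linarith [k.cast_nonneg (α := ℝ)]

lemma Gamma_add_nat_eq_mul_prod {z : ℂ} (hz : ∀ k : ℕ, z ≠ -k) (n : ℕ) :
    Gamma (z + n) = Gamma z * ∏ j ∈ range n, (z + j) := by
  induction n with
  | zero => simp
  | succ n ih =>
    have hzn : z + n ≠ 0 := fun h => hz n (eq_neg_of_add_eq_zero_left h)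
    rw [Nat.cast_succ, ← add_assoc, Gamma_add_one _ hzn, ih, prod_range_succ]
    ring

lemma tendsto_Gamma_add_succ_div_cpow_mul_factorial {z : ℂ} (hz : ∀ k : ℕ, z ≠ -k) :
    Tendsto (fun n : ℕ => Gamma (z + (n + 1)) / ((n : ℂ) ^ z * n !)) atTop (𝓝 1) := by
  have h := tendsto_const_nhds (x := Gamma z) |>.div (GammaSeq_tendsto_Gamma z) (Gamma_ne_zero hz)
  rw [div_self (Gamma_ne_zero hz)] at h
  refine h.congr fun n => ?_
  rw [Pi.div_apply, GammaSeq, div_div_eq_mul_div, ← Gamma_add_nat_eq_mul_prod hz, Nat.cast_succ]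

lemma tendsto_Gamma_add_succ_div_Gamma_add_succ {z w : ℂ} (hz : ∀ k : ℕ, z ≠ -k)
    (hw : ∀ k : ℕ, w ≠ -k) :
    Tendsto (fun n : ℕ => Gamma (z + (n + 1)) / Gamma (w + (n + 1)) / (n : ℂ) ^ (z - w))
      atTop (𝓝 1) := by
  have h := (tendsto_Gamma_add_succ_div_cpow_mul_factorial hz).div
    (tendsto_Gamma_add_succ_div_cpow_mul_factorial hw) one_ne_zero
  rw [div_one] at h
  refine h.congr' ?_
  filter_upwards [eventually_ne_atTop 0] with n hn
  have hn' : (n : ℂ) ≠ 0 := Nat.cast_ne_zero.mpr hn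
  have hz' : (n : ℂ) ^ z ≠ 0 := cpow_ne_zero_iff.mpr (Or.inl hn')
  have hw' : (n : ℂ) ^ w ≠ 0 := cpow_ne_zero_iff.mpr (Or.inl hn')
  have hfac : (n ! : ℂ) ≠ 0 := Nat.cast_ne_zero.mpr n.factorial_ne_zero
  rw [cpow_sub _ _ hn', Pi.div_apply]
  field_simp

end Complex

lemma tendsto_cGL_natCast (c : ℝ) (u : ℂ) : Tendsto (fun N : ℕ => cGL c N u) atTop (𝓝 1) := by
  obtain ⟨k, hk⟩ := exists_nat_gt (u.re + max c 0 + 1)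
  set z : ℂ := k - 1 - u
  have hz : 0 < z.re := by simp [z]; linarith [le_max_right c 0]
  have hzc : 0 < (z - c).re := by simp [z]; linarith [le_max_left c 0]
  have hpow : Tendsto (fun n : ℕ => ((((n : ℝ) / (n + k)) ^ c : ℝ) : ℂ)) atTop (𝓝 1) := by
    have := (Real.continuousAt_rpow_const 1 c (Or.inl one_ne_zero)).tendsto.comp
      (tendsto_natCast_div_add_atTop (k : ℝ))
    simpa using this.ofReal
  have h := hpow.mul (tendsto_Gamma_add_succ_div_Gamma_add_succ
    (ne_neg_natCast_of_re_pos hz) (ne_neg_natCast_of_re_pos hzc))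
  rw [one_mul] at h
  rw [← tendsto_add_atTop_iff_nat k]
  refine h.congr' ?_
  filter_upwards [eventually_ne_atTop 0] with n hn
  have hn : (0 : ℝ) < n := by positivity
  have hnk : (0 : ℝ) < n + k := by positivity
  have hnc : (((n : ℝ) ^ c : ℝ) : ℂ) ≠ 0 := ofReal_ne_zero.mpr (Real.rpow_pos_of_pos hn c).ne'
  have e₁ : z + (n + 1) = ((n + k : ℕ) : ℝ) - u := by push_cast [z]; ring
  have e₂ : z - c + (n + 1) = ((n + k : ℕ) : ℝ) - u - c := by rw [sub_add_eq_add_sub, e₁]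
  have e₃ : (n : ℂ) ^ (z - (z - c)) = (((n : ℝ) ^ c : ℝ) : ℂ) := by
    rw [sub_sub_cancel, ← ofReal_natCast, ofReal_cpow hn.le]
  have e₄ : Real.exp (-c * Real.log (n + k)) = ((n + k : ℝ) ^ c)⁻¹ := by
    rw [Real.rpow_def_of_pos hnk, ← Real.exp_neg]; ring_nf
  rw [e₃, e₁, e₂, Real.div_rpow hn.le hnk.le, cGL]
  push_cast [e₄]
  field_simp

/-- A logarithm of the one-step ratio `cGL c x u / cGL c (x + 1) u`, in the variable `t = x⁻¹`. -/
noncomputable def logStepRatio (c : ℝ) (u t : ℂ) : ℂ :=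
  c * log (1 + t) + log (1 - (u + c) * t) - log (1 - u * t)

/-- The constant `κ` in `log (cGL c x u) = -κ / x + O(x⁻²)`. -/
noncomputable def cGLExponent (c : ℝ) (u : ℂ) : ℂ := c * (c + 1) / 2 + c * u

lemma log_one_add_mul_sub_isBigO (a : ℂ) :
    (fun t : ℂ => log (1 + a * t) - (a * t - (a * t) ^ 2 / 2)) =O[𝓝 0] (· ^ 3) := by
  have hat : Tendsto (fun t : ℂ => a * t) (𝓝 0) (𝓝 0) := by
    simpa using (continuous_const_mul a).tendsto 0
  have h := (log_sub_logTaylor_isBigO 2).comp_tendsto hat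
  simp only [logTaylor, sum_range_succ, sum_range_zero] at h
  refine (h.congr_left fun t => ?_).trans ?_
  · simp; ring
  · simpa [Function.comp_def, mul_pow] using
      (isBigO_refl (· ^ 3 : ℂ → ℂ) (𝓝 0)).const_mul_left (a ^ 3)

lemma logStepRatio_add_isBigO (c : ℝ) (u : ℂ) :
    (fun t => logStepRatio c u t + cGLExponent c u * t ^ 2) =O[𝓝 0] (· ^ 3) := by
  have h := (((log_one_add_mul_sub_isBigO 1).const_mul_left c).add
    (log_one_add_mul_sub_isBigO (-(u + c)))).sub (log_one_add_mul_sub_isBigO (-u))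
  refine h.congr_left fun t => ?_
  simp only [logStepRatio, cGLExponent, one_mul, neg_mul, ← sub_eq_add_neg]
  ring

lemma cGL_ne_zero {c : ℝ} {u : ℂ} {x : ℝ} (hu : u.re < x) (huc : u.re + c < x) :
    cGL c x u ≠ 0 := by
  refine div_ne_zero (mul_ne_zero (ofReal_ne_zero.mpr (Real.exp_pos _).ne')
    (Gamma_ne_zero_of_re_pos ?_)) (Gamma_ne_zero_of_re_pos ?_) <;> simp <;> linarith

lemma cGL_div_cGL_add_one {c : ℝ} {u : ℂ} {x : ℝ} (hx : 0 < x) (hu : u.re < x)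
    (huc : u.re + c < x) :
    cGL c x u / cGL c (x + 1) u = exp (logStepRatio c u (x⁻¹ : ℝ)) := by
  have h₁ : (x : ℂ) - u ≠ 0 := fun h => by
    have := congrArg re h; simp at this; linarith
  have h₂ : (x : ℂ) - u - c ≠ 0 := fun h => by
    have := congrArg re h; simp at this; linarith
  have hx' : (x : ℂ) ≠ 0 := ofReal_ne_zero.mpr hx.ne'
  have hlog : log (1 + ((x⁻¹ : ℝ) : ℂ)) = (Real.log (x + 1) - Real.log x : ℝ) := by
    rw [← Real.log_div (by linarith) hx.ne', ← ofReal_one, ← ofReal_add,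
      ← ofReal_log (by positivity)]
    congr 2
    field_simp
  have hexp : exp (logStepRatio c u (x⁻¹ : ℝ))
      = (Real.exp (c * (Real.log (x + 1) - Real.log x)) : ℝ) * (((x : ℂ) - u - c) / ((x : ℂ) - u)) := by
    have e₁ : 1 - (u + c) * ((x⁻¹ : ℝ) : ℂ) = ((x : ℂ) - u - c) / x := by
      push_cast; field_simp; ring
    have e₂ : 1 - u * ((x⁻¹ : ℝ) : ℂ) = ((x : ℂ) - u) / x := by push_cast; field_simp
    rw [logStepRatio, exp_sub, exp_add, hlog, e₁, e₂, exp_log (div_ne_zero h₂ hx'),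
      exp_log (div_ne_zero h₁ hx'), ofReal_exp]
    push_cast
    field_simp
  have hsplit : Real.exp (-c * Real.log x)
      = Real.exp (-c * Real.log (x + 1)) * Real.exp (c * (Real.log (x + 1) - Real.log x)) := by
    rw [← Real.exp_add]; ring_nf
  rw [div_eq_iff (cGL_ne_zero (by linarith) (by linarith)), hexp, cGL, cGL, hsplit]
  push_cast
  rw [show (x : ℂ) + 1 - u - c = (x - u - c) + 1 by ring,
    show (x : ℂ) + 1 - u = (x - u) + 1 by ring, Gamma_add_one _ h₁, Gamma_add_one _ h₂]
  field_simp

lemma eventually_cGL_div_cGL_add_nat (c : ℝ) (u : ℂ) :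
    ∀ᶠ x : ℝ in atTop, ∀ m : ℕ,
      cGL c x u / cGL c (x + m) u = exp (∑ j ∈ range m, logStepRatio c u ((x + j)⁻¹ : ℝ)) := by
  filter_upwards [eventually_gt_atTop 0, eventually_gt_atTop u.re,
    eventually_gt_atTop (u.re + c)] with x h₀ h₁ h₂ m
  induction m with
  | zero => simp [div_self (cGL_ne_zero h₁ h₂)]
  | succ m ih =>
    have hm : (0 : ℝ) ≤ m := m.cast_nonneg
    rw [sum_range_succ, exp_add, ← ih, ← cGL_div_cGL_add_one (by linarith) (by linarith)
      (by linarith), Nat.cast_succ, ← add_assoc,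
      div_mul_div_cancel₀ (cGL_ne_zero (by linarith) (by linarith))]

lemma inv_sub_inv_add_one {x : ℝ} (hx : 0 < x) : x⁻¹ - (x + 1)⁻¹ = x⁻¹ * (x + 1)⁻¹ := by
  field_simp
  ring

lemma logStepRatio_inv_add_isBigO (c : ℝ) (u : ℂ) :
    (fun x : ℝ => logStepRatio c u (x⁻¹ : ℝ) + cGLExponent c u * ((x⁻¹ - (x + 1)⁻¹ : ℝ) : ℂ))
      =O[atTop] fun x : ℝ => x⁻¹ * (x⁻¹ - (x + 1)⁻¹) := by
  have hinv : Tendsto (fun x : ℝ => ((x⁻¹ : ℝ) : ℂ)) atTop (𝓝 0) := by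
    simpa using tendsto_inv_atTop_zero.ofReal
  have hcube : (fun x : ℝ => ((x⁻¹ : ℝ) : ℂ) ^ 3) =O[atTop] fun x => x⁻¹ * (x⁻¹ - (x + 1)⁻¹) := by
    refine IsBigO.of_bound 2 ?_
    filter_upwards [eventually_gt_atTop 1] with x hx
    have h₂ : x⁻¹ ≤ 2 * (x + 1)⁻¹ := by
      rw [inv_le_comm₀ (by linarith) (by positivity)]; field_simp; linarith
    rw [inv_sub_inv_add_one (by linarith), norm_pow, norm_real, Real.norm_of_nonneg (by positivity),
      Real.norm_of_nonneg (by positivity)]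
    calc x⁻¹ ^ 3 = x⁻¹ * x⁻¹ * x⁻¹ := by ring
      _ ≤ x⁻¹ * x⁻¹ * (2 * (x + 1)⁻¹) := by gcongr
      _ = 2 * (x⁻¹ * (x⁻¹ * (x + 1)⁻¹)) := by ring
  -- `x⁻¹ - (x + 1)⁻¹ = x⁻² - x⁻¹ (x⁻¹ - (x + 1)⁻¹)`, and the correction is of the target order.
  have hcorr : (fun x : ℝ => cGLExponent c u * (((x⁻¹ * (x⁻¹ - (x + 1)⁻¹) : ℝ) : ℂ)))
      =O[atTop] fun x => x⁻¹ * (x⁻¹ - (x + 1)⁻¹) :=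
    (isBigO_ofReal_left.mpr (isBigO_refl _ _)).const_mul_left _
  refine (((logStepRatio_add_isBigO c u).comp_tendsto hinv).trans hcube |>.sub hcorr).congr' ?_
    EventuallyEq.rfl
  filter_upwards [eventually_gt_atTop 0] with x hx
  have hx₀ : (x : ℂ) ≠ 0 := ofReal_ne_zero.mpr hx.ne'
  have hx₁ : (x : ℂ) + 1 ≠ 0 := by exact_mod_cast (by linarith : x + 1 ≠ 0)
  simp only [Function.comp_apply]
  push_cast
  field_simp
  ring

lemma sum_range_inv_sub_inv (L : ℝ) (m : ℕ) :
    ∑ j ∈ range m, ((L + j)⁻¹ - (L + j + 1)⁻¹) = L⁻¹ - (L + m)⁻¹ := by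
  simpa [add_assoc] using sum_range_sub' (fun j : ℕ => (L + j)⁻¹) m

lemma exists_cGL_div_cGL_add_nat_eq_exp (c : ℝ) (u : ℂ) :
    ∃ C X : ℝ, 0 ≤ C ∧ 0 < X ∧ ∀ L, X ≤ L → ∀ m : ℕ, ∃ E : ℂ,
      cGL c L u / cGL c (L + m) u = exp (E - cGLExponent c u * ((L⁻¹ - (L + m)⁻¹ : ℝ) : ℂ)) ∧
      ‖E‖ ≤ C * L⁻¹ * (L⁻¹ - (L + m)⁻¹) := by
  obtain ⟨C, hC, hCw⟩ := (logStepRatio_inv_add_isBigO c u).exists_nonneg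
  obtain ⟨X, hX⟩ := eventually_atTop.1
    ((hCw.bound.and (eventually_cGL_div_cGL_add_nat c u)).and (eventually_gt_atTop 0))
  refine ⟨C, max X 1, hC, by positivity, fun L hL m => ?_⟩
  have hXL : X ≤ L := le_trans (le_max_left _ _) hL
  obtain ⟨⟨-, hstep⟩, hL₀⟩ := hX L hXL
  set δ : ℝ → ℝ := fun y => y⁻¹ - (y + 1)⁻¹
  refine ⟨∑ j ∈ range m, (logStepRatio c u ((L + j)⁻¹ : ℝ) + cGLExponent c u * (δ (L + j) : ℂ)),
    ?_, ?_⟩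
  · rw [hstep m, sum_add_distrib, ← mul_sum, ← ofReal_sum, sum_range_inv_sub_inv]
    ring_nf
  · have hterm : ∀ j ∈ range m,
        ‖logStepRatio c u ((L + j)⁻¹ : ℝ) + cGLExponent c u * (δ (L + j) : ℂ)‖
          ≤ C * L⁻¹ * δ (L + j) := by
      intro j _
      have hj : L ≤ L + j := le_add_of_nonneg_right j.cast_nonneg
      have hδ : 0 ≤ δ (L + j) := sub_nonneg.mpr (inv_anti₀ (by linarith) (by linarith))
      refine ((hX (L + j) (hXL.trans hj)).1.1).trans ?_
      rw [Real.norm_of_nonneg (by positivity), mul_assoc]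
      gcongr
    calc _ ≤ _ := norm_sum_le _ _
      _ ≤ ∑ j ∈ range m, C * L⁻¹ * δ (L + j) := sum_le_sum hterm
      _ = C * L⁻¹ * (L⁻¹ - (L + m)⁻¹) := by rw [← mul_sum, sum_range_inv_sub_inv]

lemma tendsto_prod_cGL_div_cGL_add_nat {ι : Type*} (c : ℝ) (u : ℂ) {s : ℕ → Finset ι}
    {L : ℕ → ι → ℝ} {m : ℕ → ι → ℕ} {ℓ : ℕ → ℝ} {γ : ℝ} (hℓ : Tendsto ℓ atTop atTop)
    (hL : ∀ N i, ℓ N ≤ L N i)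
    (hγ : Tendsto (fun N => ∑ i ∈ s N, ((L N i)⁻¹ - (L N i + m N i)⁻¹)) atTop (𝓝 γ)) :
    Tendsto (fun N => ∏ i ∈ s N, cGL c (L N i) u / cGL c (L N i + m N i) u) atTop
      (𝓝 (exp (-(cGLExponent c u * γ)))) := by
  obtain ⟨C, X, hC, hX, hblock⟩ := exists_cGL_div_cGL_add_nat_eq_exp c u
  choose! E hE hEle using hblock
  set S := fun N => ∑ i ∈ s N, E (L N i) (m N i)
  have hlarge : ∀ᶠ N in atTop, X ≤ ℓ N := hℓ.eventually_ge_atTop X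
  have hprod : ∀ᶠ N in atTop,
      exp (S N - cGLExponent c u * (∑ i ∈ s N, ((L N i)⁻¹ - (L N i + m N i)⁻¹) : ℝ))
        = ∏ i ∈ s N, cGL c (L N i) u / cGL c (L N i + m N i) u := by
    filter_upwards [hlarge] with N hN
    simp only [S, ofReal_sum, mul_sum, ← sum_sub_distrib, exp_sum]
    exact prod_congr rfl fun i _ => (hE _ (hN.trans (hL N i)) _).symm
  have hS : ∀ᶠ N in atTop, ‖S N‖ ≤ C * (ℓ N)⁻¹ * ∑ i ∈ s N, ((L N i)⁻¹ - (L N i + m N i)⁻¹) := by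
    filter_upwards [hlarge] with N hN
    refine (norm_sum_le _ _).trans ?_
    rw [mul_sum]
    refine sum_le_sum fun i _ => (hEle _ (hN.trans (hL N i)) _).trans ?_
    have hℓ₀ : 0 < ℓ N := hX.trans_le hN
    have hδ : 0 ≤ (L N i)⁻¹ - (L N i + m N i)⁻¹ := sub_nonneg.mpr
      (inv_anti₀ (hℓ₀.trans_le (hL N i)) (le_add_of_nonneg_right (m N i).cast_nonneg))
    gcongr
    exact hL N i
  have hS₀ : Tendsto S atTop (𝓝 0) := by
    refine squeeze_zero_norm' hS ?_
    simpa using ((tendsto_inv_atTop_zero.comp hℓ).const_mul C).mul hγ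
  simpa using ((hS₀.sub (hγ.ofReal.const_mul _)).cexp).congr' hprod

theorem cGL_product_tendsto_interpolating_factor_general
    (c a γ : ℝ)
    (α : ℕ → ℕ → ℝ) (M : ℕ → ℕ → ℕ) (T : ℕ → ℕ)
    (hα : ∀ (N τ : ℕ), a ≤ α N τ)
    (hγlim : Filter.Tendsto
      (fun N : ℕ => ∑ τ ∈ Finset.Icc 1 (T N),
        (1 / ((N : ℝ) + α N τ - 1) - 1 / ((N : ℝ) + (M N τ : ℝ) + α N τ - 1)))
      Filter.atTop (nhds γ))
    (u : ℂ) :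
    Filter.Tendsto
      (fun N : ℕ => cGL c (N : ℝ) u *
        ∏ τ ∈ Finset.Icc 1 (T N),
          cGL c ((N : ℝ) + α N τ - 1) u / cGL c ((N : ℝ) + (M N τ : ℝ) + α N τ - 1) u)
      Filter.atTop
      (nhds (Complex.exp (-(γ : ℂ) * ((c * (c + 1) / 2 : ℝ) + (c : ℂ) * u)))) := by
  have hshift : ∀ N τ : ℕ, (N : ℝ) + M N τ + α N τ - 1 = (N + α N τ - 1) + M N τ :=
    fun _ _ => by ring
  have hℓ : Tendsto (fun N : ℕ => (N : ℝ) + (a - 1)) atTop atTop :=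
    tendsto_atTop_add_const_right _ _ tendsto_natCast_atTop_atTop
  have hprod := tendsto_prod_cGL_div_cGL_add_nat c u (s := fun N => Icc 1 (T N))
    (L := fun N τ => (N : ℝ) + α N τ - 1) (m := M) hℓ (fun N τ => by linarith [hα N τ])
    (by simpa only [hshift, one_div] using hγlim)
  have hval : exp (-(cGLExponent c u * γ))
      = exp (-(γ : ℂ) * ((c * (c + 1) / 2 : ℝ) + (c : ℂ) * u)) := by
    rw [cGLExponent]; push_cast; ring_nf
  simpa only [hshift, one_mul, hval] using (tendsto_cGL_natCast c u).mul hprod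

/-- **The pointwise limit (eq:IcT_conv) from Step 1 of the paper's proof of its β = 2
edge-fluctuation theorems.**

Fix `c > 0`, `a > 0`, `b > 0`, `γ > 0`. For each `N` let `α_τ(N) ≥ a` be reals,
`M_τ(N) ≥ bN` positive integers, and `T(N) ≥ 1` integers with
`∑_{τ=1}^{T(N)} (1/(N+α_τ−1) − 1/(N+M_τ+α_τ−1)) → γ`.  Then for every `u ∈ ℂ`,
`₍c₎G_N(u) ∏_{τ=1}^{T(N)} ₍c₎G_{N+α_τ−1}(u)/₍c₎G_{N+M_τ+α_τ−1}(u) → exp(−γ(c(c+1)/2 + cu))`. -/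
theorem cGL_product_tendsto_interpolating_factor
    (c a b γ : ℝ) (hc : 0 < c) (ha : 0 < a) (hb : 0 < b) (hγ : 0 < γ)
    (α : ℕ → ℕ → ℝ) (M : ℕ → ℕ → ℕ) (T : ℕ → ℕ)
    (hα : ∀ (N τ : ℕ), a ≤ α N τ) (hM : ∀ (N τ : ℕ), b * (N : ℝ) ≤ (M N τ : ℝ))
    (hMpos : ∀ (N τ : ℕ), 0 < M N τ)
    (hT : ∀ N, 1 ≤ T N)
    (hγlim : Filter.Tendsto
      (fun N : ℕ => ∑ τ ∈ Finset.Icc 1 (T N),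
        (1 / ((N : ℝ) + α N τ - 1) - 1 / ((N : ℝ) + (M N τ : ℝ) + α N τ - 1)))
      Filter.atTop (nhds γ))
    (u : ℂ) :
    Filter.Tendsto
      (fun N : ℕ => cGL c (N : ℝ) u *
        ∏ τ ∈ Finset.Icc 1 (T N),
          cGL c ((N : ℝ) + α N τ - 1) u / cGL c ((N : ℝ) + (M N τ : ℝ) + α N τ - 1) u)
      Filter.atTop
      (nhds (Complex.exp (-(γ : ℂ) * ((c * (c + 1) / 2 : ℝ) + (c : ℂ) * u)))) :=
  cGL_product_tendsto_interpolating_factor_general c a γ α M T hα hγlim u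
end

section
/- Let n ≥ 1, let λ = (λ_1 ≥ λ_2 ≥ ⋯ ≥ λ_n) be nonnegative integers, and for pairwise distinct x = (x_1,…,x_n) ∈ ℂ^n define the Schur polynomial by the bialternant formula s_λ(x) := det[ (x_i^{λ_j + n − j})_{i,j=1}^n ] / ∏_{1≤i<j≤n} (x_i − x_j). Let t ∈ ℂ, t ≠ 0, and suppose x_1,…,x_n are pairwise distinct and, for each i, the tuple x^{(i)} := (x_1,…,x_{i−1}, t·x_i, x_{i+1},…,x_n) also has pairwise distinct entries. Then (1 − t^{−1}) ∑_{i=1}^n [ ∏_{j≠i} (x_i − t^{−1} x_j)/(x_i − x_j) ] · s_λ(x^{(i)}) + t^{−n} s_λ(x) = ( (1 − t^{−1}) ∑_{i=1}^n t^{λ_i − i + 1} + t^{−n} ) · s_λ(x), where t^{λ_i − i + 1} denotes the integer power (possibly negative) of t. -/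
open Finset in
private lemma vdm_split' (n : ℕ) (i : Fin n) (y : Fin n → ℂ) :
    ∏ p ∈ univ.filter (fun p : Fin n × Fin n => p.1 < p.2), (y p.1 - y p.2)
    = ((∏ j ∈ Finset.Ioi i, (y i - y j)) * ∏ j ∈ Finset.Iio i, (y j - y i)) *
      ∏ p ∈ univ.filter (fun p : Fin n × Fin n => p.1 < p.2 ∧ p.1 ≠ i ∧ p.2 ≠ i),
        (y p.1 - y p.2) := by
  rw [← Finset.prod_filter_mul_prod_filter_not
    (univ.filter (fun p : Fin n × Fin n => p.1 < p.2)) (fun p => p.1 = i ∨ p.2 = i)]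
  congr 1
  · have h1 : (univ.filter (fun p : Fin n × Fin n => p.1 < p.2)).filter
        (fun p => p.1 = i ∨ p.2 = i)
        = ((Finset.Ioi i).image fun j => (i, j)) ∪ ((Finset.Iio i).image fun j => (j, i)) := by
      ext p
      simp only [mem_filter, mem_univ, true_and, mem_union, mem_image, mem_Ioi, mem_Iio,
        Prod.ext_iff]
      constructor
      · rintro ⟨hlt, h | h⟩
        · exact Or.inl ⟨p.2, by subst h; exact hlt, by simp [h], rfl⟩
        · exact Or.inr ⟨p.1, by subst h; exact hlt, rfl, by simp [h]⟩
      · rintro (⟨j, hj, h1, h2⟩ | ⟨j, hj, h1, h2⟩)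
        · exact ⟨by rw [← h1, ← h2]; exact hj, Or.inl h1.symm⟩
        · exact ⟨by rw [← h1, ← h2]; exact hj, Or.inr h2.symm⟩
    rw [h1, Finset.prod_union, Finset.prod_image (by intro a _ b _ h; simpa using h),
      Finset.prod_image (by intro a _ b _ h; simpa using h)]
    · rw [Finset.disjoint_left]
      rintro p hp hq
      simp only [mem_image, mem_Ioi, mem_Iio] at hp hq
      obtain ⟨a, ha, rfl⟩ := hp
      obtain ⟨b, hb, h⟩ := hq
      simp only [Prod.mk.injEq] at h
      rw [h.1] at hb
      exact absurd hb (lt_irrefl i)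
  · congr 1
    ext p
    simp only [mem_filter, mem_univ, true_and]
    tauto


open Finset in
private lemma vdm_update' (n : ℕ) (x : Fin n → ℂ) (i : Fin n) (c : ℂ) :
    (∏ p ∈ univ.filter (fun p : Fin n × Fin n => p.1 < p.2),
      (Function.update x i c p.1 - Function.update x i c p.2)) *
      ∏ j ∈ univ.erase i, (x i - x j)
  = (∏ p ∈ univ.filter (fun p : Fin n × Fin n => p.1 < p.2), (x p.1 - x p.2)) *
      ∏ j ∈ univ.erase i, (c - x j) := by
  have herase : (univ.erase i : Finset (Fin n)) = Finset.Iio i ∪ Finset.Ioi i := by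
    ext j
    simp only [mem_erase, mem_univ, and_true, mem_union, mem_Iio, mem_Ioi]
    exact ⟨fun h => h.lt_or_gt, fun h => h.elim (fun h => h.ne) (fun h => h.ne')⟩
  have hdisj : Disjoint (Finset.Iio i) (Finset.Ioi i) := by
    rw [Finset.disjoint_left]
    intro a ha hb
    rw [mem_Iio] at ha; rw [mem_Ioi] at hb
    exact absurd (ha.trans hb) (lt_irrefl a)
  have e1 : ∏ j ∈ Finset.Ioi i, (Function.update x i c i - Function.update x i c j)
      = ∏ j ∈ Finset.Ioi i, (c - x j) :=
    Finset.prod_congr rfl fun j hj => by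
      rw [Function.update_self, Function.update_of_ne (Finset.mem_Ioi.mp hj).ne']
  have e2 : ∏ j ∈ Finset.Iio i, (Function.update x i c j - Function.update x i c i)
      = ∏ j ∈ Finset.Iio i, (x j - c) :=
    Finset.prod_congr rfl fun j hj => by
      rw [Function.update_self, Function.update_of_ne (Finset.mem_Iio.mp hj).ne]
  have e3 : ∏ p ∈ univ.filter (fun p : Fin n × Fin n => p.1 < p.2 ∧ p.1 ≠ i ∧ p.2 ≠ i),
        (Function.update x i c p.1 - Function.update x i c p.2)
      = ∏ p ∈ univ.filter (fun p : Fin n × Fin n => p.1 < p.2 ∧ p.1 ≠ i ∧ p.2 ≠ i),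
        (x p.1 - x p.2) :=
    Finset.prod_congr rfl fun p hp => by
      simp only [mem_filter, mem_univ, true_and] at hp
      rw [Function.update_of_ne hp.2.1, Function.update_of_ne hp.2.2]
  rw [vdm_split' n i (Function.update x i c), vdm_split' n i x, herase, Finset.prod_union hdisj,
    Finset.prod_union hdisj, e1, e2, e3]
  have key : ∏ j ∈ Finset.Iio i, ((x j - c) * (x i - x j))
      = ∏ j ∈ Finset.Iio i, ((x j - x i) * (c - x j)) :=
    Finset.prod_congr rfl fun j _ => by ring
  rw [Finset.prod_mul_distrib, Finset.prod_mul_distrib] at key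
  linear_combination ((∏ j ∈ Finset.Ioi i, (c - x j)) * (∏ j ∈ Finset.Ioi i, (x i - x j)) *
    ∏ p ∈ univ.filter (fun p : Fin n × Fin n => p.1 < p.2 ∧ p.1 ≠ i ∧ p.2 ≠ i),
      (x p.1 - x p.2)) * key


open Equiv in
private lemma det_sum_update' (n : ℕ) (μ : Fin n → ℕ) (t : ℂ) (x : Fin n → ℂ) :
    ∑ i : Fin n, Matrix.det (Matrix.of fun k l : Fin n =>
        (Function.update x i (t * x i)) k ^ μ l)
  = (∑ j : Fin n, t ^ μ j) * Matrix.det (Matrix.of fun k l : Fin n => x k ^ μ l) := by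
  have hdet : ∀ i : Fin n,
      Matrix.det (Matrix.of fun k l : Fin n => (Function.update x i (t * x i)) k ^ μ l)
      = ∑ σ : Perm (Fin n), ((Perm.sign σ : ℤ) : ℂ) *
          (t ^ μ (σ⁻¹ i) * ∏ k, x (σ k) ^ μ k) := by
    intro i
    rw [Matrix.det_apply']
    refine Finset.sum_congr rfl fun σ _ => ?_
    congr 1
    have h1 : ∀ k : Fin n,
        (Matrix.of fun k l : Fin n => (Function.update x i (t * x i)) k ^ μ l) (σ k) k
        = (if σ k = i then t ^ μ k else 1) * x (σ k) ^ μ k := by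
      intro k
      by_cases h : σ k = i
      · simp [Matrix.of_apply, h, Function.update_self, mul_pow]
      · rw [Matrix.of_apply, Function.update_of_ne h, if_neg h, one_mul]
    rw [Finset.prod_congr rfl (fun k _ => h1 k), Finset.prod_mul_distrib]
    congr 1
    rw [Finset.prod_eq_single (σ⁻¹ i)]
    · simp
    · intro k _ hk
      rw [if_neg]
      intro h
      exact hk (by rw [← h]; simp)
    · simp
  simp_rw [hdet]
  rw [Finset.sum_comm, Matrix.det_apply', Finset.mul_sum]
  refine Finset.sum_congr rfl fun σ _ => ?_
  simp only [Matrix.of_apply]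
  rw [← Equiv.sum_comp σ⁻¹ (fun j => t ^ μ j), Finset.sum_mul]
  exact Finset.sum_congr rfl fun i _ => by ring

/-- The Schur polynomial in `n` variables, defined for pairwise distinct arguments by the
bialternant formula `s_λ(x) = det[(x_i^{λ_j + n − j})_{i,j}] / ∏_{i<j} (x_i − x_j)`
(here `j` is 0-indexed, so the exponent is `λ_j + (n − 1 − j)`). -/
noncomputable def schurBialternant (n : ℕ) (lam : Fin n → ℕ) (x : Fin n → ℂ) : ℂ :=
  Matrix.det (Matrix.of fun i j : Fin n => x i ^ (lam j + (n - 1 - (j : ℕ)))) /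
    ∏ p ∈ Finset.univ.filter (fun p : Fin n × Fin n => p.1 < p.2), (x p.1 - x p.2)

/-- **Eigenrelation `D_t s_λ = 𝒑_t(λ) s_λ` for the `q = t` Macdonald difference operator**
(used and proved via the bialternant formula in the paper's Appendix C).

For a partition `λ_1 ≥ ⋯ ≥ λ_n ≥ 0`, `t ≠ 0`, and pairwise distinct `x` such that each
`x^{(i)} = (x_1,…,t·x_i,…,x_n)` also has pairwise distinct entries,
`(1 − t⁻¹) ∑_i [∏_{j≠i} (x_i − t⁻¹x_j)/(x_i − x_j)] s_λ(x^{(i)}) + t^{−n} s_λ(x)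
  = ((1 − t⁻¹) ∑_i t^{λ_i − i + 1} + t^{−n}) s_λ(x)`
(with `i` 1-indexed in the eigenvalue, i.e. the exponent is `λ_i − i` for 0-indexed `i`). -/
theorem schur_difference_operator_eigenrelation (n : ℕ) (hn : 1 ≤ n)
    (lam : Fin n → ℕ) (hlam : ∀ i j : Fin n, i ≤ j → lam j ≤ lam i)
    (t : ℂ) (ht : t ≠ 0) (x : Fin n → ℂ) (hx : Function.Injective x)
    (hx' : ∀ i : Fin n, Function.Injective (Function.update x i (t * x i))) :
    (1 - t⁻¹) * (∑ i : Fin n,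
        (∏ j ∈ Finset.univ.erase i, (x i - t⁻¹ * x j) / (x i - x j)) *
          schurBialternant n lam (Function.update x i (t * x i)))
      + t⁻¹ ^ n * schurBialternant n lam x
    = ((1 - t⁻¹) * (∑ i : Fin n, t ^ ((lam i : ℤ) - (i : ℕ) )) + t⁻¹ ^ n) *
        schurBialternant n lam x := by
  classical
  set μ : Fin n → ℕ := fun l => lam l + (n - 1 - (l : ℕ)) with hμ
  set Δ : (Fin n → ℂ) → ℂ := fun y =>
    ∏ p ∈ Finset.univ.filter (fun p : Fin n × Fin n => p.1 < p.2), (y p.1 - y p.2) with hΔdef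
  set A : (Fin n → ℂ) → ℂ := fun y =>
    Matrix.det (Matrix.of fun k l : Fin n => y k ^ μ l) with hAdef
  have hschur : ∀ y : Fin n → ℂ, schurBialternant n lam y = A y / Δ y := fun y => rfl
  -- nonvanishing of Vandermonde products
  have hΔne : ∀ y : Fin n → ℂ, Function.Injective y → Δ y ≠ 0 := by
    intro y hy
    refine Finset.prod_ne_zero_iff.mpr fun p hp => ?_
    simp only [Finset.mem_filter] at hp
    exact sub_ne_zero_of_ne (fun h => absurd (hy h) (ne_of_lt hp.2))
  have hΔ : Δ x ≠ 0 := hΔne x hx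
  have hQ : ∀ i : Fin n, (∏ j ∈ Finset.univ.erase i, (x i - x j)) ≠ 0 := by
    intro i
    refine Finset.prod_ne_zero_iff.mpr fun j hj => ?_
    simp only [Finset.mem_erase] at hj
    exact sub_ne_zero_of_ne (fun h => hj.1 (hx h).symm)
  have hkey : ∀ i : Fin n,
      Δ (Function.update x i (t * x i)) * ∏ j ∈ Finset.univ.erase i, (x i - x j)
      = Δ x * ∏ j ∈ Finset.univ.erase i, (t * x i - x j) :=
    fun i => vdm_update' n x i (t * x i)
  have hC : ∀ i : Fin n, (∏ j ∈ Finset.univ.erase i, (t * x i - x j)) ≠ 0 := by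
    intro i
    have h1 : Δ (Function.update x i (t * x i)) * ∏ j ∈ Finset.univ.erase i, (x i - x j) ≠ 0 :=
      mul_ne_zero (hΔne _ (hx' i)) (hQ i)
    rw [hkey i] at h1
    exact fun h => h1 (by rw [h, mul_zero])
  -- per-term simplification
  have hterm : ∀ i : Fin n,
      (∏ j ∈ Finset.univ.erase i, (x i - t⁻¹ * x j) / (x i - x j)) *
          schurBialternant n lam (Function.update x i (t * x i))
      = t⁻¹ ^ (n - 1) * (A (Function.update x i (t * x i)) / Δ x) := by
    intro i
    rw [hschur]
    have hcard : (Finset.univ.erase i).card = n - 1 := by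
      rw [Finset.card_erase_of_mem (Finset.mem_univ i), Finset.card_univ, Fintype.card_fin]
    have hnum : ∏ j ∈ Finset.univ.erase i, (x i - t⁻¹ * x j)
        = t⁻¹ ^ (n - 1) * ∏ j ∈ Finset.univ.erase i, (t * x i - x j) := by
      have : ∀ j ∈ Finset.univ.erase i, x i - t⁻¹ * x j = t⁻¹ * (t * x i - x j) := by
        intro j _
        rw [mul_sub, ← mul_assoc, inv_mul_cancel₀ ht, one_mul]
      rw [Finset.prod_congr rfl this, Finset.prod_mul_distrib, Finset.prod_const, hcard]
    rw [Finset.prod_div_distrib, hnum]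
    have hΔi := hΔne _ (hx' i)
    rw [div_mul_div_comm, ← mul_div_assoc, div_eq_div_iff (mul_ne_zero (hQ i) hΔi) hΔ]
    linear_combination (-(t⁻¹ ^ (n-1)) * A (Function.update x i (t * x i))) * hkey i
  rw [Finset.sum_congr rfl (fun i _ => hterm i)]
  -- sum of determinants
  have hsum : ∑ i : Fin n, t⁻¹ ^ (n - 1) * (A (Function.update x i (t * x i)) / Δ x)
      = t⁻¹ ^ (n - 1) * ((∑ j : Fin n, t ^ μ j) * A x) / Δ x := by
    have h2 : ∀ i ∈ (Finset.univ : Finset (Fin n)),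
        t⁻¹ ^ (n - 1) * (A (Function.update x i (t * x i)) / Δ x)
        = t⁻¹ ^ (n - 1) / Δ x * A (Function.update x i (t * x i)) := fun i _ => by ring
    rw [Finset.sum_congr rfl h2, ← Finset.mul_sum, det_sum_update' n μ t x]
    ring
  rw [hsum]
  -- eigenvalue identification
  have heig : ∀ i : Fin n, t ^ ((lam i : ℤ) - (i : ℕ)) = t⁻¹ ^ (n - 1) * t ^ μ i := by
    intro i
    have hi : (i : ℕ) < n := i.isLt
    have h1 : ((lam i : ℤ) - (i : ℕ)) = (μ i : ℤ) - ((n - 1 : ℕ) : ℤ) := by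
      simp only [hμ]
      push_cast [Nat.sub_sub]
      omega
    rw [h1, zpow_sub₀ ht, zpow_natCast, zpow_natCast, div_eq_mul_inv, ← inv_pow]
    ring
  rw [Finset.sum_congr rfl (fun i _ => heig i), ← Finset.mul_sum, hschur]
  ring
end
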